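/- arXiv:1704.06349 — 6 statements merged into one kernel-verified Lean document; each statement's English description precedes it below -/
import Mathlib

section
/- Let F₂ = ⟨a,b⟩ be the free group of rank 2 and let φ : (ℤ/2)^{F₂} → (ℤ/2 × ℤ/2)^{F₂} be defined by φ(x)_g = (x_g + x_{ga}, x_g + x_{gb}). Then φ is a surjective group homomorphism (with respect to pointwise addition) whose kernel consists exactly of the two constant functions. -/
open FreeGroup

namespace OWAux

abbrev G := FreeGroup (Fin 2)

/-- component selector -/
def comp (i : Fin 2) (p : ZMod 2 × ZMod 2) : ZMod 2 := if i = 0 then p.1 else p.2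

/-- value of the section along a reduced word (read as the word of `g⁻¹`). -/
def f (y : G → ZMod 2 × ZMod 2) : List (Fin 2 × Bool) → ZMod 2
  | [] => 0
  | (i, bb) :: L =>
      (if bb then comp i (y (FreeGroup.mk ((i, true) :: L))⁻¹)
       else comp i (y (FreeGroup.mk L)⁻¹)) + f y L

lemma zmod2_aux : ∀ a b : ZMod 2, a + (b + a) = b := by decide
lemma zmod2_aux2 : ∀ a b : ZMod 2, (b + a) + a = b := by decide
lemma zmod2_aux3 : ∀ a b : ZMod 2, a + b = 0 → b = a := by decide

lemma reduce_tail {L : List (Fin 2 × Bool)} {x : Fin 2 × Bool}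
    (h : reduce (x :: L) = x :: L) : reduce L = L := by
  rw [reduce.cons] at h
  rcases hL : reduce L with _ | ⟨hd, tl⟩
  · rw [hL] at h
    simpa using congrArg List.tail h
  · rw [hL] at h
    have h' : (if x.1 = hd.1 ∧ x.2 = !hd.2 then tl else x :: hd :: tl) = x :: L := h
    by_cases hc : x.1 = hd.1 ∧ x.2 = !hd.2
    · rw [if_pos hc] at h'
      have h1 : tl.length ≤ L.length := by
        have := (reduce.red (L := L)).length_le
        rw [hL] at this
        simpa using Nat.le_trans (Nat.le_succ _) this
      rw [h'] at h1
      simp at h1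
    · rw [if_neg hc] at h'
      exact List.cons_injective h'

lemma reduce_cons_nocancel {L : List (Fin 2 × Bool)} {i : Fin 2}
    (hL : reduce L = L) (hh : ∀ t, L ≠ (i, true) :: t) :
    reduce ((i, false) :: L) = (i, false) :: L := by
  rw [reduce.cons, hL]
  rcases L with _ | ⟨⟨j, c⟩, t⟩
  · rfl
  · have : ¬((i, false).1 = (j, c).1 ∧ (i, false).2 = !(j, c).2) := by
      rintro ⟨h1, h2⟩
      simp at h1 h2
      exact hh t (by rw [h1, h2])
    simp only [this, if_false]

lemma reduce_cons_cancel {t : List (Fin 2 × Bool)} {i : Fin 2}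
    (hL : reduce ((i, true) :: t) = (i, true) :: t) :
    reduce ((i, false) :: (i, true) :: t) = t := by
  rw [reduce.cons, hL]
  simp

/-- The key step lemma: `x g + x (g * of i) = comp i (y g)`. -/
lemma key (y : G → ZMod 2 × ZMod 2) (g : G) (i : Fin 2) :
    f y (toWord g⁻¹) + f y (toWord (g * FreeGroup.of i)⁻¹) = comp i (y g) := by
  set w := toWord g⁻¹ with hw
  have hred : reduce w = w := reduce_toWord _
  have hmkw : FreeGroup.mk w = g⁻¹ := mk_toWord
  have hmul : (g * FreeGroup.of i)⁻¹ = FreeGroup.mk ((i, false) :: w) := by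
    rw [mul_inv_rev, ← hmkw]
    have : (FreeGroup.of i)⁻¹ = FreeGroup.mk [(i, false)] := by
      rw [show (FreeGroup.of i : G) = FreeGroup.mk [(i, true)] from rfl, inv_mk]
      rfl
    rw [this, mul_mk]
    rfl
  rw [hmul, toWord_mk]
  by_cases hc : ∃ t, w = (i, true) :: t
  · obtain ⟨t, ht⟩ := hc
    rw [ht] at hred ⊢
    rw [reduce_cons_cancel hred]
    have : f y ((i, true) :: t) = comp i (y g) + f y t := by
      show (if true then comp i (y (FreeGroup.mk ((i, true) :: t))⁻¹)
          else comp i (y (FreeGroup.mk t)⁻¹)) + f y t = _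
      rw [if_pos rfl, ← ht, hmkw, inv_inv]
    rw [this, zmod2_aux2]
  · push_neg at hc
    rw [reduce_cons_nocancel hred hc]
    have : f y ((i, false) :: w) = comp i (y g) + f y w := by
      show (if false then comp i (y (FreeGroup.mk ((i, true) :: w))⁻¹)
          else comp i (y (FreeGroup.mk w)⁻¹)) + f y w = _
      rw [if_neg (by simp), hmkw, inv_inv]
    rw [this, zmod2_aux]

end OWAux

/-- The Ornstein-Weiss map `φ : (ℤ/2)^{F₂} → (ℤ/2 × ℤ/2)^{F₂}`,
`φ(x)_g = (x_g + x_{ga}, x_g + x_{gb})`, is a surjective group homomorphism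
(for pointwise addition) whose kernel consists exactly of the constant functions. -/
theorem stmt_0
    (φ : (FreeGroup (Fin 2) → ZMod 2) → (FreeGroup (Fin 2) → ZMod 2 × ZMod 2))
    (hφ : ∀ x g, φ x g =
      (x g + x (g * FreeGroup.of 0), x g + x (g * FreeGroup.of 1))) :
    (∀ x y, φ (x + y) = φ x + φ y) ∧
    Function.Surjective φ ∧
    (∀ x, φ x = 0 ↔ ∀ g h, x g = x h) := by
  refine ⟨?_, ?_, ?_⟩
  · intro x y
    funext g
    simp only [hφ, Pi.add_apply, Prod.mk_add_mk, Prod.mk.injEq]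
    constructor <;> ring
  · intro y
    refine ⟨fun g => OWAux.f y (FreeGroup.toWord g⁻¹), ?_⟩
    funext g
    rw [hφ]
    have h0 := OWAux.key y g 0
    have h1 := OWAux.key y g 1
    have e0 : OWAux.comp 0 (y g) = (y g).1 := rfl
    have e1 : OWAux.comp 1 (y g) = (y g).2 := rfl
    rw [e0] at h0
    rw [e1] at h1
    rw [h0, h1]
  · intro x
    constructor
    · intro h g h'
      have step : ∀ (g : FreeGroup (Fin 2)) (i : Fin 2), x (g * FreeGroup.of i) = x g := by
        intro g i
        have := congrFun h g
        rw [hφ] at this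
        have h0 : x g + x (g * FreeGroup.of 0) = 0 := congrArg Prod.fst this
        have h1 : x g + x (g * FreeGroup.of 1) = 0 := congrArg Prod.snd this
        fin_cases i
        · exact OWAux.zmod2_aux3 _ _ h0
        · exact OWAux.zmod2_aux3 _ _ h1
      have main : ∀ (w g : FreeGroup (Fin 2)), x (g * w) = x g := by
        intro w
        induction w using FreeGroup.induction_on with
        | C1 => simp
        | of i => intro g; exact step g i
        | inv_of i _ =>
            intro g
            have := step (g * (FreeGroup.of i)⁻¹) i
            rw [inv_mul_cancel_right] at this
            exact this.symm
        | mul u v hu hv =>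
            intro g
            rw [← mul_assoc, hv, hu]
      have hg : x g = x 1 := by simpa using main g 1
      have hh : x h' = x 1 := by simpa using main h' 1
      rw [hg, hh]
    · intro h
      funext g
      rw [hφ, h (g * FreeGroup.of 0) g, h (g * FreeGroup.of 1) g]
      have : ∀ a : ZMod 2, a + a = 0 := by decide
      simp [this]
end

section
/- Let T be a finite tree with at least 2 vertices, and let n ≥ 0. Suppose every pair of distinct leaves of T is at graph-distance ≥ n apart. For a leaf v, let T_v denote the smallest subtree of T containing every leaf of T except v. Then there exists a leaf v such that the distance from v to T_v is at least ⌈n/2⌉. -/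
open SimpleGraph Walk

section TreeLemmas

variable {V : Type*} [DecidableEq V] {G : SimpleGraph V}

/-- In a tree, every path realizes the distance between its endpoints. -/
private lemma tree_path_length (hT : G.IsTree) {x y : V} {p : G.Walk x y} (hp : p.IsPath) :
    p.length = G.dist x y := by
  obtain ⟨q, hq, hql⟩ := hT.isConnected.exists_path_of_dist x y
  have h := hT.IsAcyclic.path_unique ⟨p, hp⟩ ⟨q, hq⟩
  rw [← hql]
  exact congrArg Walk.length (congrArg Subtype.val h)

private lemma split_of_mem (hT : G.IsTree) {x y : V} {p : G.Walk x y} (hp : p.IsPath)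
    {c : V} (hc : c ∈ p.support) : G.dist x c + G.dist c y = G.dist x y := by
  rw [← tree_path_length hT hp, ← tree_path_length hT (hp.takeUntil hc),
      ← tree_path_length hT (hp.dropUntil hc), ← Walk.length_append, Walk.take_spec]

private lemma adj_dist_ne (hT : G.IsTree) {u v : V} (h : G.Adj u v) (r : V) :
    G.dist r u ≠ G.dist r v := by
  intro he
  obtain ⟨s, hs, hsl⟩ := hT.isConnected.exists_path_of_dist r u
  have hvs : v ∉ s.support := by
    intro hvs
    have h2 := split_of_mem hT hs hvs
    have h3 : G.dist v u = 0 := by omega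
    exact h.ne' (hT.isConnected.dist_eq_zero_iff.mp h3)
  have hvs' : v ∉ s.reverse.support := by rwa [Walk.support_reverse, List.mem_reverse]
  have hpath : (Walk.cons h.symm s.reverse).IsPath := hs.reverse.cons hvs'
  have hlen := tree_path_length hT hpath
  have hcm : G.dist v r = G.dist r v := SimpleGraph.dist_comm ..
  rw [Walk.length_cons, Walk.length_reverse] at hlen
  omega

/-- Median construction: for a fixed path `p : x → y` and any vertex `a`, there is a
vertex `c` on `p` such that `c` lies on geodesics from `a` to both `x` and `y`. -/
private lemma median_aux (hT : G.IsTree) {x y : V} (p : G.Walk x y) (hp : p.IsPath) :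
    ∀ (N : ℕ) {a : V} (q : G.Walk a x), q.IsPath → q.length ≤ N →
      ∃ c ∈ p.support, G.dist a c + G.dist c x = G.dist a x ∧
        G.dist a c + G.dist c y = G.dist a y := by
  intro N
  induction N with
  | zero =>
      intro a q hq hl
      have h0 : q.length = 0 := by omega
      have : a = x := Walk.eq_of_length_eq_zero h0
      subst this
      exact ⟨a, p.start_mem_support, by simp, by simp⟩
  | succ N ih =>
      intro a q hq hl
      cases q with
      | nil => exact ⟨x, p.start_mem_support, by simp, by simp⟩
      | @cons _ b _ hab q' =>
        by_cases ha : a ∈ p.support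
        · exact ⟨a, ha, by simp, by simp⟩
        · have hq' : q'.IsPath := hq.of_cons
          have hl' : q'.length ≤ N := by
            rw [Walk.length_cons] at hl; omega
          obtain ⟨c, hc, e1, e2⟩ := ih q' hq' hl'
          have hdab : G.dist a b = 1 := dist_eq_one_iff_adj.mpr hab
          have haX : G.dist a x = 1 + G.dist b x := by
            have h1 := tree_path_length hT hq
            have h2 := tree_path_length hT hq'
            rw [Walk.length_cons] at h1
            omega
          -- show the geodesic from a to y also passes through b
          obtain ⟨r, hr, hrl⟩ := hT.isConnected.exists_path_of_dist a y
          have hbr : b ∈ r.support := by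
            by_contra hbr
            -- then x → a → y is a path, so a ∈ p.support, contradiction
            have hdisj : ∀ u, u ∈ (Walk.cons hab q').support → u ∈ r.support → u = a := by
              intro u hu hur
              by_contra hua
              rw [Walk.support_cons, List.mem_cons] at hu
              have huq' : u ∈ q'.support := hu.resolve_left hua
              have s1 : G.dist a u + G.dist u x = G.dist a x :=
                split_of_mem hT hq (by rw [Walk.support_cons]; exact List.mem_cons_of_mem _ huq')
              have s2 : G.dist b u + G.dist u x = G.dist b x := split_of_mem hT hq' huq'
              have hau : G.dist a u = 1 + G.dist b u := by omega
              -- unique path b → u does not pass through a, but prepending a gives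
              -- a path a → u through b; by uniqueness it equals r.takeUntil u,
              -- which avoids b : contradiction
              obtain ⟨s', hs', hs'l⟩ := hT.isConnected.exists_path_of_dist b u
              have has' : a ∉ s'.support := by
                intro has'
                have h4 := split_of_mem hT hs' has'
                have hcm : G.dist b a = G.dist a b := SimpleGraph.dist_comm ..
                omega
              have hps' : (Walk.cons hab s').IsPath := hs'.cons has'
              have h5 : (r.takeUntil u hur).IsPath := hr.takeUntil hur
              have h6 := hT.IsAcyclic.path_unique ⟨r.takeUntil u hur, h5⟩ ⟨Walk.cons hab s', hps'⟩
              have h6' : r.takeUntil u hur = Walk.cons hab s' := Subtype.ext_iff.mp h6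
              have h7 : b ∈ (r.takeUntil u hur).support := by
                rw [h6', Walk.support_cons]
                exact List.mem_cons_of_mem _ s'.start_mem_support
              exact hbr (Walk.support_takeUntil_subset _ _ h7)
            have hWpath : ((Walk.cons hab q').reverse.append r).IsPath := by
              rw [Walk.isPath_def, Walk.support_append]
              refine List.Nodup.append ?_ ?_ ?_
              · rw [Walk.support_reverse]; exact List.nodup_reverse.mpr hq.support_nodup
              · exact hr.support_nodup.tail
              · intro u hu hur
                rw [Walk.support_reverse, List.mem_reverse] at hu
                have hur' : u ∈ r.support := List.mem_of_mem_tail hur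
                have hua := hdisj u hu hur'
                subst hua
                have hcons : r.support = u :: r.support.tail := by
                  cases r with
                  | nil => simp at hur
                  | cons h w => simp
                have hnd := hr.support_nodup
                rw [hcons] at hnd
                exact (List.nodup_cons.mp hnd).1 hur
            have h8 := hT.IsAcyclic.path_unique
              ⟨(Walk.cons hab q').reverse.append r, hWpath⟩ ⟨p, hp⟩
            apply ha
            have h8' : (Walk.cons hab q').reverse.append r = p := Subtype.ext_iff.mp h8
            rw [← h8', Walk.mem_support_append_iff]
            left
            rw [Walk.support_reverse, List.mem_reverse, Walk.support_cons]
            exact List.mem_cons_self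
          have haY : G.dist a y = 1 + G.dist b y := by
            have h9 := split_of_mem hT hr hbr
            rw [← hrl] at h9 ⊢
            omega
          -- now show dist a c = dist b c + 1
          have hne := adj_dist_ne hT hab c
          have t1 : G.dist a c ≤ G.dist a b + G.dist b c := hT.isConnected.dist_triangle
          have t2 : G.dist b c ≤ G.dist b a + G.dist a c := hT.isConnected.dist_triangle
          have t3 : G.dist a x ≤ G.dist a c + G.dist c x := hT.isConnected.dist_triangle
          have hcm1 : G.dist c a = G.dist a c := SimpleGraph.dist_comm ..
          have hcm2 : G.dist c b = G.dist b c := SimpleGraph.dist_comm ..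
          have hcm3 : G.dist b a = G.dist a b := SimpleGraph.dist_comm ..
          exact ⟨c, hc, by omega, by omega⟩

/-- For a tree, a fixed path `p : x → y`, and any vertex `a`, the median of `a,x,y`. -/
private lemma exists_median_on (hT : G.IsTree) {x y : V} (p : G.Walk x y) (hp : p.IsPath)
    (a : V) : ∃ c ∈ p.support, G.dist a c + G.dist c x = G.dist a x ∧
      G.dist a c + G.dist c y = G.dist a y := by
  obtain ⟨q, hq, _⟩ := hT.isConnected.exists_path_of_dist a x
  exact median_aux hT p hp q.length q hq le_rfl

/-- An endpoint of a pair realizing the maximal distance is a leaf. -/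
private lemma degree_eq_one_of_max {V : Type*} [Fintype V] [DecidableEq V] {G : SimpleGraph V}
    [DecidableRel G.Adj] (hT : G.IsTree) {a b : V} (hab : a ≠ b)
    (hmax : ∀ u w : V, G.dist u w ≤ G.dist a b) : G.degree a = 1 := by
  obtain ⟨p, hp, hpl⟩ := hT.isConnected.exists_path_of_dist a b
  cases p with
  | nil => exact absurd rfl hab
  | @cons _ s _ h₀ p₀ =>
      have hp₀ : p₀.IsPath := hp.of_cons
      have hsb : G.dist s b = p₀.length := (tree_path_length hT hp₀).symm
      have hlen : G.dist a b = p₀.length + 1 := by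
        rw [← hpl]; exact Walk.length_cons _ _
      have hkey : ∀ t : V, G.Adj a t → t = s := by
        intro t ht
        by_cases htp : t ∈ (Walk.cons h₀ p₀).support
        · rw [Walk.support_cons, List.mem_cons] at htp
          rcases htp with rfl | htp₀
          · exact absurd rfl ht.ne
          · have s2 : G.dist s t + G.dist t b = G.dist s b := split_of_mem hT hp₀ htp₀
            have s1 : G.dist a t + G.dist t b = G.dist a b :=
              split_of_mem hT hp (by rw [Walk.support_cons]; exact List.mem_cons_of_mem _ htp₀)
            have hat : G.dist a t = 1 := dist_eq_one_iff_adj.mpr ht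
            have hst : G.dist s t = 0 := by omega
            exact (hT.isConnected.dist_eq_zero_iff.mp hst).symm
        · exfalso
          have hpath : (Walk.cons ht.symm (Walk.cons h₀ p₀)).IsPath := hp.cons htp
          have h1 := tree_path_length hT hpath
          rw [Walk.length_cons, Walk.length_cons] at h1
          have h2 := hmax t b
          omega
      have hnb : G.neighborFinset a = {s} := by
        ext t
        simp only [mem_neighborFinset, Finset.mem_singleton]
        exact ⟨hkey t, fun h => h ▸ h₀⟩
      rw [← card_neighborFinset_eq_degree, hnb, Finset.card_singleton]

end TreeLemmas

/-- Let `T` be a finite tree with at least two vertices in which any two distinct leaves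
are at distance at least `n`.  For a leaf `v`, the smallest subtree `T_v` containing all
leaves other than `v` consists of the vertices lying on a geodesic between two leaves
`x, y ≠ v`.  Then some leaf `v` is at distance at least `⌈n/2⌉` from `T_v`. -/
theorem stmt_1 {V : Type*} [Fintype V] (G : SimpleGraph V) [DecidableRel G.Adj]
    (hT : G.IsTree) (hcard : 2 ≤ Fintype.card V) (n : ℕ)
    (hleaf : ∀ v w : V, G.degree v = 1 → G.degree w = 1 → v ≠ w → n ≤ G.dist v w) :
    ∃ v : V, G.degree v = 1 ∧
      ∀ w : V,
        (∃ x y : V, G.degree x = 1 ∧ G.degree y = 1 ∧ x ≠ v ∧ y ≠ v ∧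
          G.dist x w + G.dist w y = G.dist x y) →
        (n + 1) / 2 ≤ G.dist v w := by
  classical
  have hne : Nonempty V := by
    have : 0 < Fintype.card V := by omega
    exact Fintype.card_pos_iff.mp this
  -- pick a pair (a, b) at maximal distance
  obtain ⟨⟨a, b⟩, hmax'⟩ := Finite.exists_max (fun p : V × V => G.dist p.1 p.2)
  have hmax : ∀ u w : V, G.dist u w ≤ G.dist a b := fun u w => hmax' (u, w)
  have hab : a ≠ b := by
    obtain ⟨u, w, huw⟩ := Fintype.exists_pair_of_one_lt_card (by omega : 1 < Fintype.card V)
    intro h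
    subst h
    have h1 : 0 < G.dist u w := hT.isConnected.pos_dist_of_ne huw
    have h2 := hmax u w
    rw [SimpleGraph.dist_self] at h2
    omega
  have hdega : G.degree a = 1 := degree_eq_one_of_max hT hab hmax
  refine ⟨a, hdega, ?_⟩
  rintro w ⟨x, y, hx, hy, hxa, hya, hgeo⟩
  -- the path from a to b
  obtain ⟨p, hp, hpl⟩ := hT.isConnected.exists_path_of_dist a b
  -- medians of (x, a, b) and (y, a, b)
  obtain ⟨c, hc, e1, e2⟩ := exists_median_on hT p hp x
  obtain ⟨c', hc', f1, f2⟩ := exists_median_on hT p hp y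
  -- splits along p
  have sc : G.dist a c + G.dist c b = G.dist a b := split_of_mem hT hp hc
  have sc' : G.dist a c' + G.dist c' b = G.dist a b := split_of_mem hT hp hc'
  -- relation between c and c' : one of the two split cases
  have hcc' : G.dist a c + G.dist c c' = G.dist a c' ∨
      G.dist c' c + G.dist c b = G.dist c' b := by
    have hspec := Walk.take_spec p hc'
    have hcsplit : c ∈ (p.takeUntil c' hc').support ∨ c ∈ (p.dropUntil c' hc').support := by
      rw [← Walk.mem_support_append_iff, hspec]
      exact hc
    rcases hcsplit with h | h
    · exact Or.inl (split_of_mem hT (hp.takeUntil hc') h)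
    · exact Or.inr (split_of_mem hT (hp.dropUntil hc') h)
  -- numeric facts
  have hn1 : n ≤ G.dist x a := hleaf x a hx hdega hxa
  have hn2 : n ≤ G.dist y a := hleaf y a hy hdega hya
  have hmx : G.dist x b ≤ G.dist a b := hmax x b
  have hmy : G.dist y b ≤ G.dist a b := hmax y b
  -- triangle inequalities
  have t1 : G.dist x a ≤ G.dist x w + G.dist w a := hT.isConnected.dist_triangle
  have t2 : G.dist y a ≤ G.dist y w + G.dist w a := hT.isConnected.dist_triangle
  have t3 : G.dist x y ≤ G.dist x c + G.dist c y := hT.isConnected.dist_triangle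
  have t4 : G.dist c y ≤ G.dist c c' + G.dist c' y := hT.isConnected.dist_triangle
  -- normalize orientations
  have k1 : G.dist x c = G.dist c x := SimpleGraph.dist_comm ..
  have k2 : G.dist x a = G.dist a x := SimpleGraph.dist_comm ..
  have k3 : G.dist x b = G.dist b x := SimpleGraph.dist_comm ..
  have k4 : G.dist c' y = G.dist y c' := SimpleGraph.dist_comm ..
  have k5 : G.dist c' c = G.dist c c' := SimpleGraph.dist_comm ..
  have k6 : G.dist w y = G.dist y w := SimpleGraph.dist_comm ..
  have k7 : G.dist w a = G.dist a w := SimpleGraph.dist_comm ..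
  have k8 : G.dist y a = G.dist a y := SimpleGraph.dist_comm ..
  have k10 : G.dist c a = G.dist a c := SimpleGraph.dist_comm ..
  have k11 : G.dist c' a = G.dist a c' := SimpleGraph.dist_comm ..
  omega
end

section
/- Let 𝒫, 𝒬, ℛ be finite measurable partitions of a probability space (X,μ) with ℛ ≤ 𝒫 (ℛ coarser than 𝒫), let T be a pmp action of the free group F_r = ⟨s₁,…,s_r⟩, and let 𝒬 = 𝒫 ∨ T^t ℛ for some generator t. Then for every s ∈ {s₁,…,s_r}: H_μ(𝒬 | 𝒫 ∨ T^s𝒫) + H_μ(T^s𝒬 | 𝒫 ∨ T^s𝒫 ∨ 𝒬) − 2 H_μ(𝒬|𝒫) ≤ 0, and for s = t additionally H_μ(𝒬 | 𝒫 ∨ T^t𝒫) = 0. Consequently F_μ(T,𝒬) ≤ F_μ(T,𝒫), where F_μ(T,𝒫) := H_μ(𝒫) + Σ_{i=1}^r (H_μ(𝒫 ∨ T^{s_i}𝒫) − 2H_μ(𝒫)). -/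
open MeasureTheory

/-- Shannon entropy of the finite partition of `X` given by the fibers of `f : X → ι`. -/
noncomputable def Hfin {X : Type*} [MeasurableSpace X] (μ : Measure X)
    {ι : Type*} [Fintype ι] (f : X → ι) : ℝ :=
  ∑ i : ι, Real.negMulLog (μ (f ⁻¹' {i})).toReal

/-- Conditional Shannon entropy `H_μ(f | g) = H_μ(f ∨ g) − H_μ(g)` for finite partitions. -/
noncomputable def condH {X : Type*} [MeasurableSpace X] (μ : Measure X)
    {ι κ : Type*} [Fintype ι] [Fintype κ] (f : X → ι) (g : X → κ) : ℝ :=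
  Hfin μ (fun x => (f x, g x)) - Hfin μ g


set_option linter.unusedSectionVars false

open Finset


section Aux

variable {α β ι κ L : Type*} [Fintype ι] [Fintype κ] [Fintype L]

lemma nml_add_le {a b : ℝ} (ha : 0 ≤ a) (hb : 0 ≤ b) :
    Real.negMulLog (a + b) ≤ Real.negMulLog a + Real.negMulLog b := by
  rcases ha.eq_or_lt with h | h
  · simp [← h]
  rcases hb.eq_or_lt with h' | h'
  · simp [← h']
  have h1 : Real.log a ≤ Real.log (a + b) := Real.log_le_log h (by linarith)
  have h2 : Real.log b ≤ Real.log (a + b) := Real.log_le_log h' (by linarith)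
  simp only [Real.negMulLog, neg_mul]
  nlinarith

lemma nml_sum_le (S : Finset α) (a : α → ℝ) (ha : ∀ i ∈ S, 0 ≤ a i) :
    Real.negMulLog (∑ i ∈ S, a i) ≤ ∑ i ∈ S, Real.negMulLog (a i) := by
  induction S using Finset.cons_induction with
  | empty => simp
  | cons i S hi ih =>
    rw [Finset.sum_cons, Finset.sum_cons]
    calc Real.negMulLog (a i + ∑ j ∈ S, a j)
        ≤ Real.negMulLog (a i) + Real.negMulLog (∑ j ∈ S, a j) :=
          nml_add_le (ha i (Finset.mem_cons_self _ _))
            (Finset.sum_nonneg fun j hj => ha j (Finset.mem_cons_of_mem hj))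
      _ ≤ _ := by
          have := ih (fun j hj => ha j (Finset.mem_cons_of_mem hj))
          linarith

lemma gibbs (S : Finset α) (p q : α → ℝ) (hp : ∀ i ∈ S, 0 ≤ p i) (hq : ∀ i ∈ S, 0 ≤ q i)
    (hpq : ∀ i ∈ S, p i ≠ 0 → 0 < q i) :
    ∑ i ∈ S, p i * (Real.log (q i) - Real.log (p i)) ≤ ∑ i ∈ S, (q i - p i) := by
  refine Finset.sum_le_sum fun i hi => ?_
  rcases (hp i hi).eq_or_lt with h | h
  · rw [← h]; simpa using hq i hi
  · have hqi : 0 < q i := hpq i hi h.ne'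
    have hlog : Real.log (q i) - Real.log (p i) = Real.log (q i / p i) := by
      rw [Real.log_div hqi.ne' h.ne']
    rw [hlog]
    have := Real.log_le_sub_one_of_pos (div_pos hqi h)
    calc p i * Real.log (q i / p i) ≤ p i * (q i / p i - 1) := by nlinarith
      _ = q i - p i := by field_simp

lemma submod_core (a : ι → κ → ℝ) (ha : ∀ i k, 0 ≤ a i k) :
    (∑ i, ∑ k, Real.negMulLog (a i k)) + Real.negMulLog (∑ i, ∑ k, a i k) ≤
      (∑ i, Real.negMulLog (∑ k, a i k)) + ∑ k, Real.negMulLog (∑ i, a i k) := by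
  set C : ι → ℝ := fun i => ∑ k, a i k with hC
  set D : κ → ℝ := fun k => ∑ i, a i k with hD
  set B : ℝ := ∑ i, ∑ k, a i k with hB
  have hCnn : ∀ i, 0 ≤ C i := fun i => Finset.sum_nonneg fun k _ => ha i k
  have hDnn : ∀ k, 0 ≤ D k := fun k => Finset.sum_nonneg fun i _ => ha i k
  have hBnn : 0 ≤ B := Finset.sum_nonneg fun i _ => hCnn i
  have hBD : B = ∑ k, D k := Finset.sum_comm
  rcases hBnn.eq_or_lt with hB0 | hBpos
  · -- everything is zero
    have hz : ∀ i k, a i k = 0 := by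
      intro i k
      have h1 : ∀ i ∈ (univ : Finset ι), (0:ℝ) ≤ ∑ k, a i k := fun i _ => hCnn i
      have h2 := (Finset.sum_eq_zero_iff_of_nonneg h1).mp hB0.symm
      have h3 := (Finset.sum_eq_zero_iff_of_nonneg (fun k _ => ha i k)).mp
        (h2 i (mem_univ i))
      exact h3 k (mem_univ k)
    simp only [hC, hD, hB] at *
    simp [hz]
  · -- positive total mass; use Gibbs
    have hCle : ∀ i k, a i k ≤ C i := fun i k =>
      Finset.single_le_sum (fun k _ => ha i k) (mem_univ k)
    have hDle : ∀ i k, a i k ≤ D k := fun i k =>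
      Finset.single_le_sum (fun i _ => ha i k) (mem_univ i)
    set p : ι × κ → ℝ := fun z => a z.1 z.2 with hp
    set q : ι × κ → ℝ := fun z => C z.1 * D z.2 / B with hq
    have hsum_p : ∑ z : ι × κ, p z = B := by
      rw [Fintype.sum_prod_type]
    have hsum_q : ∑ z : ι × κ, q z = B := by
      rw [Fintype.sum_prod_type]
      simp only [hq]
      calc ∑ i, ∑ k, C i * D k / B = (∑ i, ∑ k, C i * D k) / B := by
            rw [Finset.sum_div]
            exact Finset.sum_congr rfl fun i _ => by rw [Finset.sum_div]
        _ = ((∑ i, C i) * ∑ k, D k) / B := by rw [Finset.sum_mul_sum]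
        _ = B := by rw [← hBD]; field_simp; rfl
    have hgibbs := gibbs (univ : Finset (ι × κ)) p q
      (fun z _ => ha z.1 z.2)
      (fun z _ => div_nonneg (mul_nonneg (hCnn z.1) (hDnn z.2)) hBnn)
      (fun z _ hz => by
        have h1 : 0 < a z.1 z.2 := (ha z.1 z.2).lt_of_ne' hz
        have h2 : 0 < C z.1 := lt_of_lt_of_le h1 (hCle z.1 z.2)
        have h3 : 0 < D z.2 := lt_of_lt_of_le h1 (hDle z.1 z.2)
        exact div_pos (mul_pos h2 h3) hBpos)
    rw [Finset.sum_sub_distrib, hsum_p, hsum_q, sub_self] at hgibbs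
    -- identity: the Gibbs sum equals LHS - RHS
    have hterm : ∀ z : ι × κ, p z * (Real.log (q z) - Real.log (p z)) =
        a z.1 z.2 * Real.log (C z.1) + a z.1 z.2 * Real.log (D z.2)
          - a z.1 z.2 * Real.log B - a z.1 z.2 * Real.log (a z.1 z.2) := by
      intro z
      rcases eq_or_ne (a z.1 z.2) 0 with h0 | h0
      · simp [hp, hq, h0]
      · have h1 : 0 < a z.1 z.2 := (ha z.1 z.2).lt_of_ne' h0
        have h2 : 0 < C z.1 := lt_of_lt_of_le h1 (hCle z.1 z.2)
        have h3 : 0 < D z.2 := lt_of_lt_of_le h1 (hDle z.1 z.2)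
        simp only [hp, hq]
        rw [Real.log_div (mul_pos h2 h3).ne' hBpos.ne', Real.log_mul h2.ne' h3.ne']
        ring
    have hexp : ∑ z : ι × κ, p z * (Real.log (q z) - Real.log (p z)) =
        ((∑ i, ∑ k, Real.negMulLog (a i k)) + Real.negMulLog B)
          - ((∑ i, Real.negMulLog (C i)) + ∑ k, Real.negMulLog (D k)) := by
      rw [Finset.sum_congr rfl fun z _ => hterm z]
      rw [Fintype.sum_prod_type]
      have e1 : ∑ i, ∑ k, (a i k * Real.log (C i) + a i k * Real.log (D k)
          - a i k * Real.log B - a i k * Real.log (a i k)) =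
          (∑ i, ∑ k, a i k * Real.log (C i)) + (∑ i, ∑ k, a i k * Real.log (D k))
          - (∑ i, ∑ k, a i k * Real.log B) - (∑ i, ∑ k, a i k * Real.log (a i k)) := by
        simp [Finset.sum_add_distrib, Finset.sum_sub_distrib]
      rw [e1]
      have e2 : ∑ i, ∑ k, a i k * Real.log (C i) = -∑ i, Real.negMulLog (C i) := by
        rw [← Finset.sum_neg_distrib]
        refine Finset.sum_congr rfl fun i _ => ?_
        rw [← Finset.sum_mul]
        simp [Real.negMulLog, hC]
      have e3 : ∑ i, ∑ k, a i k * Real.log (D k) = -∑ k, Real.negMulLog (D k) := by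
        rw [Finset.sum_comm, ← Finset.sum_neg_distrib]
        refine Finset.sum_congr rfl fun k _ => ?_
        rw [← Finset.sum_mul]
        simp [Real.negMulLog, hD]
      have e4 : ∑ i, ∑ k, a i k * Real.log B = -Real.negMulLog B := by
        have : ∑ i, ∑ k, a i k * Real.log B = (∑ i, ∑ k, a i k) * Real.log B := by
          rw [Finset.sum_mul]
          exact Finset.sum_congr rfl fun i _ => by rw [Finset.sum_mul]
        rw [this, ← hB]; simp [Real.negMulLog]
      have e5 : ∑ i, ∑ k, a i k * Real.log (a i k) = -∑ i, ∑ k, Real.negMulLog (a i k) := by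
        rw [← Finset.sum_neg_distrib]
        refine Finset.sum_congr rfl fun i _ => ?_
        rw [← Finset.sum_neg_distrib]
        refine Finset.sum_congr rfl fun k _ => ?_
        simp [Real.negMulLog]
      rw [e2, e3, e4, e5]
      ring
    rw [hexp] at hgibbs
    linarith

end Aux
section Meas

open MeasureTheory Finset

variable {X : Type*} [MeasurableSpace X] (μ : Measure X) [IsProbabilityMeasure μ]
variable {ι κ L : Type*} [Fintype ι] [Fintype κ] [Fintype L]

/-- All fibers measurable. -/
def Mfib {X : Type*} [MeasurableSpace X] {ι : Type*} (f : X → ι) : Prop :=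
  ∀ i, MeasurableSet (f ⁻¹' {i})

variable {f : X → ι} {g : X → κ} {h : X → L}

lemma Mfib_preimage (hf : Mfib f) (S : Set ι) : MeasurableSet (f ⁻¹' S) := by
  have : f ⁻¹' S = ⋃ i ∈ S, f ⁻¹' {i} := by ext x; simp
  rw [this]
  exact MeasurableSet.biUnion (Set.to_countable S) fun i _ => hf i

lemma Mfib_comp (hf : Mfib f) (e : ι → κ) : Mfib (fun x => e (f x)) :=
  fun k => Mfib_preimage hf (e ⁻¹' {k})

lemma Mfib_pair (hf : Mfib f) (hg : Mfib g) : Mfib (fun x => (f x, g x)) := by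
  intro p
  have : (fun x => (f x, g x)) ⁻¹' {p} = f ⁻¹' {p.1} ∩ g ⁻¹' {p.2} := by
    ext x; simp [Prod.ext_iff]
  rw [this]; exact (hf _).inter (hg _)

lemma dist_comp (hf : Mfib f) (e : ι → κ) [DecidableEq κ] (k : κ) :
    (μ ((fun x => e (f x)) ⁻¹' {k})).toReal
      = ∑ i ∈ univ.filter (fun i => e i = k), (μ (f ⁻¹' {i})).toReal := by
  have hU : (fun x => e (f x)) ⁻¹' {k}
      = ⋃ i ∈ (univ.filter (fun i => e i = k) : Finset ι), f ⁻¹' {i} := by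
    ext x
    simp only [Set.mem_preimage, Set.mem_singleton_iff, Set.mem_iUnion, mem_filter, mem_univ,
      true_and]
    constructor
    · intro hx; exact ⟨f x, hx, rfl⟩
    · rintro ⟨i, hi, hx⟩; rw [hx]; exact hi
  rw [hU, measure_biUnion_finset ?_ (fun i _ => hf i)]
  · exact ENNReal.toReal_sum (fun i _ => measure_ne_top μ _)
  · intro i _ j _ hij
    refine Set.disjoint_left.mpr fun x hxi hxj => hij ?_
    simp only [Set.mem_preimage, Set.mem_singleton_iff] at hxi hxj
    rw [← hxi, ← hxj]

lemma Hfin_comp_le (hf : Mfib f) (e : ι → κ) :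
    Hfin μ (fun x => e (f x)) ≤ Hfin μ f := by
  classical
  calc Hfin μ (fun x => e (f x))
      = ∑ k, Real.negMulLog (∑ i ∈ univ.filter (fun i => e i = k), (μ (f ⁻¹' {i})).toReal) :=
        Finset.sum_congr rfl fun k _ => by rw [dist_comp μ hf e k]
    _ ≤ ∑ k, ∑ i ∈ univ.filter (fun i => e i = k), Real.negMulLog ((μ (f ⁻¹' {i})).toReal) :=
        Finset.sum_le_sum fun k _ => nml_sum_le _ _ (fun i _ => ENNReal.toReal_nonneg)
    _ = Hfin μ f := Finset.sum_fiberwise _ _ _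

lemma Hfin_comp_inj (hf : Mfib f) {e : ι → κ} (he : Function.Injective e) :
    Hfin μ (fun x => e (f x)) = Hfin μ f := by
  have hXne : Nonempty X := by
    by_contra hX
    rw [not_nonempty_iff] at hX
    have h1 : μ Set.univ = 1 := measure_univ
    rw [Set.univ_eq_empty_iff.mpr hX] at h1
    simp at h1
  have hιne : Nonempty ι := ⟨f (Classical.arbitrary X)⟩
  refine le_antisymm (Hfin_comp_le μ hf e) ?_
  have h2 := Hfin_comp_le μ (Mfib_comp hf e) (Function.invFun e)
  have h3 : (fun x => Function.invFun e (e (f x))) = f := by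
    funext x; exact Function.leftInverse_invFun he (f x)
  rwa [h3] at h2

lemma Hfin_comp_mp {φ : X → X} (hφ : MeasurePreserving φ μ μ) (hf : Mfib f) :
    Hfin μ (fun x => f (φ x)) = Hfin μ f :=
  Finset.sum_congr rfl fun i _ => by
    rw [show (fun x => f (φ x)) ⁻¹' {i} = φ ⁻¹' (f ⁻¹' {i}) from rfl,
      hφ.measure_preimage (hf i).nullMeasurableSet]

lemma dist_marginal {ι' κ' : Type*} [Fintype ι'] {F : X → κ'} (hF : Mfib F)
    {m : ι' → κ'} (hm : Function.Injective m) {s : Set X} (hs : s = ⋃ z, F ⁻¹' {m z}) :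
    (μ s).toReal = ∑ z, (μ (F ⁻¹' {m z})).toReal := by
  have : s = ⋃ z ∈ (univ : Finset ι'), F ⁻¹' {m z} := by rw [hs]; simp
  rw [this, measure_biUnion_finset ?_ (fun z _ => hF (m z))]
  · exact ENNReal.toReal_sum (fun z _ => measure_ne_top μ _)
  · intro z _ z' _ hzz'
    refine Set.disjoint_left.mpr fun x hx hx' => hzz' ?_
    simp only [Set.mem_preimage, Set.mem_singleton_iff] at hx hx'
    exact hm (hx ▸ hx')

/-- submodularity: `H(f,g,h) + H(g) ≤ H(f,g) + H(g,h)`. -/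
lemma Hfin_submod (hf : Mfib f) (hg : Mfib g) (hh : Mfib h) :
    Hfin μ (fun x => (f x, g x, h x)) + Hfin μ g ≤
      Hfin μ (fun x => (f x, g x)) + Hfin μ (fun x => (g x, h x)) := by
  classical
  set F : X → ι × κ × L := fun x => (f x, g x, h x) with hF
  have hMF : Mfib F := Mfib_pair hf (Mfib_pair hg hh)
  set a : ι → κ → L → ℝ := fun i j k => (μ (F ⁻¹' {(i, j, k)})).toReal with ha
  have hann : ∀ i j k, 0 ≤ a i j k := fun _ _ _ => ENNReal.toReal_nonneg
  -- marginals
  have hg' : ∀ j, (μ (g ⁻¹' {j})).toReal = ∑ i, ∑ k, a i j k := by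
    intro j
    have hm : Function.Injective (fun z : ι × L => (z.1, j, z.2)) := by
      intro z z' hz
      simp only [Prod.ext_iff] at hz
      exact Prod.ext hz.1 hz.2.2
    have hset : g ⁻¹' {j} = ⋃ z : ι × L, F ⁻¹' {(z.1, j, z.2)} := by
      ext x
      constructor
      · intro hx
        have hx' : g x = j := hx
        exact Set.mem_iUnion.mpr ⟨(f x, h x), show F x = (f x, j, h x) by rw [← hx']⟩
      · intro hx
        obtain ⟨z, hz⟩ := Set.mem_iUnion.mp hx
        have hz' : F x = (z.1, j, z.2) := hz
        show g x = j
        exact congrArg (fun w : ι × κ × L => w.2.1) hz'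
    rw [dist_marginal μ hMF hm hset, Fintype.sum_prod_type]
  have hfg' : ∀ p : ι × κ, (μ ((fun x => (f x, g x)) ⁻¹' {p})).toReal = ∑ k, a p.1 p.2 k := by
    intro p
    have hm : Function.Injective (fun k : L => (p.1, p.2, k)) := by
      intro z z' hz
      simpa [Prod.ext_iff] using hz
    have hset : (fun x => (f x, g x)) ⁻¹' {p} = ⋃ k : L, F ⁻¹' {(p.1, p.2, k)} := by
      ext x
      constructor
      · intro hx
        have hx' : (f x, g x) = p := hx
        exact Set.mem_iUnion.mpr ⟨h x, show F x = (p.1, p.2, h x) by rw [← hx']⟩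
      · intro hx
        obtain ⟨k, hk⟩ := Set.mem_iUnion.mp hx
        have hk' : F x = (p.1, p.2, k) := hk
        show (f x, g x) = p
        have h1 : f x = p.1 := congrArg (fun w : ι × κ × L => w.1) hk'
        have h2 : g x = p.2 := congrArg (fun w : ι × κ × L => w.2.1) hk'
        rw [h1, h2]
    rw [dist_marginal μ hMF hm hset]
  have hgh' : ∀ p : κ × L, (μ ((fun x => (g x, h x)) ⁻¹' {p})).toReal = ∑ i, a i p.1 p.2 := by
    intro p
    have hm : Function.Injective (fun i : ι => (i, p.1, p.2)) := by
      intro z z' hz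
      simpa [Prod.ext_iff] using hz
    have hset : (fun x => (g x, h x)) ⁻¹' {p} = ⋃ i : ι, F ⁻¹' {(i, p.1, p.2)} := by
      ext x
      constructor
      · intro hx
        have hx' : (g x, h x) = p := hx
        exact Set.mem_iUnion.mpr ⟨f x, show F x = (f x, p.1, p.2) by rw [← hx']⟩
      · intro hx
        obtain ⟨i, hi⟩ := Set.mem_iUnion.mp hx
        have hi' : F x = (i, p.1, p.2) := hi
        show (g x, h x) = p
        have h1 : g x = p.1 := congrArg (fun w : ι × κ × L => w.2.1) hi'
        have h2 : h x = p.2 := congrArg (fun w : ι × κ × L => w.2.2) hi'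
        rw [h1, h2]
    rw [dist_marginal μ hMF hm hset]
  -- rewrite the four entropies
  have HF : Hfin μ F = ∑ i, ∑ j, ∑ k, Real.negMulLog (a i j k) := by
    rw [Hfin, Fintype.sum_prod_type]
    exact Finset.sum_congr rfl fun i _ => by rw [Fintype.sum_prod_type]
  have Hg : Hfin μ g = ∑ j, Real.negMulLog (∑ i, ∑ k, a i j k) :=
    Finset.sum_congr rfl fun j _ => by rw [hg' j]
  have Hfg : Hfin μ (fun x => (f x, g x)) = ∑ i, ∑ j, Real.negMulLog (∑ k, a i j k) := by
    rw [Hfin, Fintype.sum_prod_type]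
    exact Finset.sum_congr rfl fun i _ => Finset.sum_congr rfl fun j _ => by
      rw [hfg' (i, j)]
  have Hgh : Hfin μ (fun x => (g x, h x)) = ∑ j, ∑ k, Real.negMulLog (∑ i, a i j k) := by
    rw [Hfin, Fintype.sum_prod_type]
    exact Finset.sum_congr rfl fun j _ => Finset.sum_congr rfl fun k _ => by
      rw [hgh' (j, k)]
  rw [HF, Hg, Hfg, Hgh]
  have hsum := Finset.sum_le_sum (s := (univ : Finset κ))
    (fun j _ => submod_core (fun i k => a i j k) (fun i k => hann i j k))
  rw [Finset.sum_add_distrib, Finset.sum_add_distrib] at hsum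
  have c1 : ∑ j, ∑ i, ∑ k, Real.negMulLog (a i j k)
      = ∑ i, ∑ j, ∑ k, Real.negMulLog (a i j k) := Finset.sum_comm
  have c2 : ∑ j, ∑ i, Real.negMulLog (∑ k, a i j k)
      = ∑ i, ∑ j, Real.negMulLog (∑ k, a i j k) := Finset.sum_comm
  linarith

end Meas

set_option maxHeartbeats 2000000 in
/-- Simple splittings do not increase `F`.  Let `T` be a pmp action of the free group
`F_r`, `Pp` a finite partition, `ℛ = π ∘ Pp` a coarsening of `Pp` and
`𝒬 = Pp ∨ T^t ℛ` a simple splitting of `Pp` (here `sPp` denotes the image partition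
`x ↦ Pp (T^{s⁻¹} x)`).  Then for every generator `s`,
`H(𝒬 | Pp ∨ sPp) + H(s𝒬 | Pp ∨ sPp ∨ 𝒬) − 2H(𝒬|Pp) ≤ 0`, for `s = t` moreover
`H(𝒬 | Pp ∨ tPp) = 0`, and consequently `F_μ(T,𝒬) ≤ F_μ(T,Pp)`, where
`F_μ(T,Pp) = H(Pp) + ∑ᵢ (H(Pp ∨ sᵢPp) − 2H(Pp))`. -/
theorem stmt_7 {X : Type*} [MeasurableSpace X] (μ : Measure X) [IsProbabilityMeasure μ]
    (r : ℕ) (T : FreeGroup (Fin r) → X → X)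
    (hT : ∀ g, MeasurePreserving (T g) μ μ)
    (hT1 : ∀ x, T 1 x = x) (hTmul : ∀ g h x, T (g * h) x = T g (T h x))
    {P R : Type*} [Fintype P] [Fintype R] [MeasurableSpace P] [MeasurableSingletonClass P]
    (Pp : X → P) (hPp : Measurable Pp) (π : P → R) (t : Fin r) :
    (∀ s : Fin r,
      condH μ (fun x => (Pp x, π (Pp (T (FreeGroup.of t)⁻¹ x))))
          (fun x => (Pp x, Pp (T (FreeGroup.of s)⁻¹ x))) +
        condH μ
          (fun x => (Pp (T (FreeGroup.of s)⁻¹ x),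
            π (Pp (T (FreeGroup.of t)⁻¹ (T (FreeGroup.of s)⁻¹ x)))))
          (fun x => ((Pp x, Pp (T (FreeGroup.of s)⁻¹ x)),
            (Pp x, π (Pp (T (FreeGroup.of t)⁻¹ x))))) -
        2 * condH μ (fun x => (Pp x, π (Pp (T (FreeGroup.of t)⁻¹ x)))) Pp ≤ 0) ∧
    condH μ (fun x => (Pp x, π (Pp (T (FreeGroup.of t)⁻¹ x))))
      (fun x => (Pp x, Pp (T (FreeGroup.of t)⁻¹ x))) = 0 ∧
    (Hfin μ (fun x => (Pp x, π (Pp (T (FreeGroup.of t)⁻¹ x)))) +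
        ∑ i : Fin r,
          (Hfin μ (fun x => ((Pp x, π (Pp (T (FreeGroup.of t)⁻¹ x))),
              (Pp (T (FreeGroup.of i)⁻¹ x),
                π (Pp (T (FreeGroup.of t)⁻¹ (T (FreeGroup.of i)⁻¹ x)))))) -
            2 * Hfin μ (fun x => (Pp x, π (Pp (T (FreeGroup.of t)⁻¹ x))))) ≤
      Hfin μ Pp +
        ∑ i : Fin r,
          (Hfin μ (fun x => (Pp x, Pp (T (FreeGroup.of i)⁻¹ x))) - 2 * Hfin μ Pp)) := by
  classical
  have hMPp : Mfib Pp := fun p => hPp (measurableSet_singleton p)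
  let sP : Fin r → X → P := fun s x => Pp (T (FreeGroup.of s)⁻¹ x)
  let Q : X → P × R := fun x => (Pp x, π (Pp (T (FreeGroup.of t)⁻¹ x)))
  let sQ : Fin r → X → P × R := fun s x => Q (T (FreeGroup.of s)⁻¹ x)
  have hMsP : ∀ s, Mfib (sP s) := fun s p => (hT (FreeGroup.of s)⁻¹).measurable (hMPp p)
  have hMQ : Mfib Q := Mfib_pair hMPp (Mfib_comp (hMsP t) π)
  have hMsQ : ∀ s, Mfib (sQ s) := fun s p => (hT (FreeGroup.of s)⁻¹).measurable (hMQ p)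
  -- H(Q ∨ Pp) = H(Q)
  have hQP : Hfin μ (fun x => (Q x, Pp x)) = Hfin μ Q := by
    have he : Function.Injective (fun z : P × R => (z, z.1)) :=
      fun a b hab => congrArg Prod.fst hab
    exact Hfin_comp_inj μ hMQ he
  have hcQP : condH μ Q Pp = Hfin μ Q - Hfin μ Pp := by
    show Hfin μ (fun x => (Q x, Pp x)) - Hfin μ Pp = _
    rw [hQP]
  -- part 2 : H(Q | Pp ∨ tPp) = 0
  have part2 : condH μ Q (fun x => (Pp x, sP t x)) = 0 := by
    have he : Function.Injective (fun z : P × P => ((z.1, π z.2), z)) :=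
      fun a b hab => congrArg Prod.snd hab
    have h := Hfin_comp_inj μ (Mfib_pair hMPp (hMsP t)) he
    show Hfin μ (fun x => (Q x, (Pp x, sP t x))) - Hfin μ (fun x => (Pp x, sP t x)) = 0
    rw [sub_eq_zero]
    exact h
  -- conditioning on the finer partition Pp ∨ sPp
  have c1 : ∀ s, condH μ Q (fun x => (Pp x, sP s x)) ≤ condH μ Q Pp := by
    intro s
    have h := Hfin_submod μ (f := Q) (g := Pp) (h := sP s) hMQ hMPp (hMsP s)
    show Hfin μ (fun x => (Q x, (Pp x, sP s x))) - Hfin μ (fun x => (Pp x, sP s x)) ≤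
      Hfin μ (fun x => (Q x, Pp x)) - Hfin μ Pp
    linarith [h]
  -- second term
  have c2 : ∀ s, condH μ (sQ s) (fun x => ((Pp x, sP s x), Q x)) ≤ condH μ Q Pp := by
    intro s
    have eA : Hfin μ (fun x => (sQ s x, ((Pp x, sP s x), Q x)))
        = Hfin μ (fun x => (sQ s x, (sP s x, Q x))) := by
      have he : Function.Injective
          (fun z : (P × R) × P × (P × R) => (z.1, ((z.2.2.1, z.2.1), z.2.2))) :=
        Function.LeftInverse.injective
          (g := fun w : (P × R) × (P × P) × (P × R) => (w.1, (w.2.1.2, w.2.2)))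
          (fun z => rfl)
      exact Hfin_comp_inj μ (Mfib_pair (hMsQ s) (Mfib_pair (hMsP s) hMQ)) he
    have eB : Hfin μ (fun x => ((Pp x, sP s x), Q x)) = Hfin μ (fun x => (sP s x, Q x)) := by
      have he : Function.Injective (fun z : P × (P × R) => ((z.2.1, z.1), z.2)) :=
        Function.LeftInverse.injective
          (g := fun w : (P × P) × (P × R) => (w.1.2, w.2)) (fun z => rfl)
      exact Hfin_comp_inj μ (Mfib_pair (hMsP s) hMQ) he
    have hsub := Hfin_submod μ (f := sQ s) (g := sP s) (h := Q) (hMsQ s) (hMsP s) hMQ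
    have m1 : Hfin μ (fun x => (sQ s x, sP s x)) = Hfin μ (fun x => (Q x, Pp x)) :=
      Hfin_comp_mp μ (hT (FreeGroup.of s)⁻¹) (Mfib_pair hMQ hMPp)
    have m2 : Hfin μ (sP s) = Hfin μ Pp := Hfin_comp_mp μ (hT (FreeGroup.of s)⁻¹) hMPp
    show Hfin μ (fun x => (sQ s x, ((Pp x, sP s x), Q x)))
        - Hfin μ (fun x => ((Pp x, sP s x), Q x)) ≤
      Hfin μ (fun x => (Q x, Pp x)) - Hfin μ Pp
    linarith [eA, eB, hsub, m1, m2]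
  have part1 : ∀ s, condH μ Q (fun x => (Pp x, sP s x)) +
      condH μ (sQ s) (fun x => ((Pp x, sP s x), Q x)) - 2 * condH μ Q Pp ≤ 0 :=
    fun s => by
      have h0 : 0 ≤ condH μ Q Pp := by
        rw [hcQP]
        have h := Hfin_comp_le μ hMQ Prod.fst
        have h2 : (fun x => Prod.fst (Q x)) = Pp := rfl
        rw [h2] at h
        linarith
      linarith [c1 s, c2 s]
  -- the key estimate used for part 3
  have key : ∀ s, Hfin μ (fun x => (Q x, sQ s x)) - 2 * Hfin μ Q ≤
      (Hfin μ (fun x => (Pp x, sP s x)) - 2 * Hfin μ Pp)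
        - (if s = t then Hfin μ Q - Hfin μ Pp else 0) := by
    intro s
    have c1' : Hfin μ (fun x => (Q x, (Pp x, sP s x))) - Hfin μ (fun x => (Pp x, sP s x)) ≤
        Hfin μ Q - Hfin μ Pp := by
      have h := c1 s
      rw [hcQP] at h
      exact h
    have c2' : Hfin μ (fun x => (sQ s x, ((Pp x, sP s x), Q x)))
        - Hfin μ (fun x => ((Pp x, sP s x), Q x)) ≤ Hfin μ Q - Hfin μ Pp := by
      have h := c2 s
      rw [hcQP] at h
      exact h
    have f2 : Hfin μ (fun x => ((Pp x, sP s x), Q x))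
        = Hfin μ (fun x => (Q x, (Pp x, sP s x))) := by
      have he : Function.Injective (fun z : (P × P) × (P × R) => (z.2, z.1)) :=
        Function.LeftInverse.injective
          (g := fun w : (P × R) × (P × P) => (w.2, w.1)) (fun z => rfl)
      exact (Hfin_comp_inj μ (Mfib_pair (Mfib_pair hMPp (hMsP s)) hMQ) he).symm
    have f3 : Hfin μ (fun x => (Q x, sQ s x)) ≤
        Hfin μ (fun x => (sQ s x, ((Pp x, sP s x), Q x))) := by
      have h := Hfin_comp_le μ (Mfib_pair (hMsQ s) (Mfib_pair (Mfib_pair hMPp (hMsP s)) hMQ))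
        (fun w : (P × R) × (P × P) × (P × R) => (w.2.2, w.1))
      exact h
    by_cases hst : s = t
    · subst hst
      have p2 : Hfin μ (fun x => (Q x, (Pp x, sP s x)))
          - Hfin μ (fun x => (Pp x, sP s x)) = 0 := part2
      rw [if_pos rfl]
      linarith
    · rw [if_neg hst]
      linarith
  -- part 3
  have part3 : Hfin μ Q + ∑ i : Fin r, (Hfin μ (fun x => (Q x, sQ i x)) - 2 * Hfin μ Q) ≤
      Hfin μ Pp + ∑ i : Fin r, (Hfin μ (fun x => (Pp x, sP i x)) - 2 * Hfin μ Pp) := by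
    have hsum := Finset.sum_le_sum (s := (univ : Finset (Fin r))) (fun i _ => key i)
    have hite : ∑ i : Fin r, ((Hfin μ (fun x => (Pp x, sP i x)) - 2 * Hfin μ Pp)
        - (if i = t then Hfin μ Q - Hfin μ Pp else 0))
        = (∑ i : Fin r, (Hfin μ (fun x => (Pp x, sP i x)) - 2 * Hfin μ Pp))
          - (Hfin μ Q - Hfin μ Pp) := by
      rw [Finset.sum_sub_distrib, Fintype.sum_ite_eq' t (fun _ => Hfin μ Q - Hfin μ Pp)]
    rw [hite] at hsum
    linarith
  exact ⟨part1, part2, part3⟩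
end

section
/- Let (X,d) be a compact metric space with finite ball dimension D = dim_ball(X,d), and let T : X → X be a continuous map with finite Lipschitz constant L = Lip(T). Then the topological entropy of T satisfies h_top(T) ≤ D · max(0, log L). -/
open Filter

/-- `minSpan X ε` : the minimum cardinality of an `ε`-spanning subset of `X`. -/
noncomputable def minSpan (X : Type*) [MetricSpace X] (ε : ℝ) : ℕ :=
  sInf {n : ℕ | ∃ s : Finset X, s.card = n ∧ ∀ x : X, ∃ y ∈ s, dist x y ≤ ε}

/-- The ball dimension `dim_ball(X,d) = limsup_{ε → 0⁺} log S_ε(X,d) / |log ε|`. -/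
noncomputable def ballDim (X : Type*) [MetricSpace X] : EReal :=
  limsup (fun ε : ℝ => ((Real.log (minSpan X ε) / |Real.log ε| : ℝ) : EReal))
    (nhdsWithin 0 (Set.Ioi 0))

/-- In a compact space, the spanning-set infimum is attained and is at least 1. -/
lemma minSpan_spec (X : Type*) [MetricSpace X] [CompactSpace X] [Nonempty X] {δ : ℝ}
    (hδ : 0 < δ) :
    ∃ s : Finset X, s.card = minSpan X δ ∧ (∀ x : X, ∃ y ∈ s, dist x y ≤ δ) ∧
      1 ≤ minSpan X δ := by
  have hne : {n : ℕ | ∃ s : Finset X, s.card = n ∧ ∀ x : X, ∃ y ∈ s, dist x y ≤ δ}.Nonempty := by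
    have htb : TotallyBounded (Set.univ : Set X) := isCompact_univ.totallyBounded
    obtain ⟨t, htf, htc⟩ := Metric.totallyBounded_iff.mp htb δ hδ
    refine ⟨htf.toFinset.card, htf.toFinset, rfl, fun x => ?_⟩
    obtain ⟨y, hy1, hy2⟩ := Set.mem_iUnion₂.mp (htc (Set.mem_univ x))
    exact ⟨y, htf.mem_toFinset.mpr hy1, le_of_lt (Metric.mem_ball.mp hy2)⟩
  obtain ⟨s, hcard, hspan⟩ := Nat.sInf_mem hne
  refine ⟨s, hcard, hspan, ?_⟩
  by_contra h
  have h0 : sInf {n : ℕ | ∃ s : Finset X, s.card = n ∧ ∀ x : X, ∃ y ∈ s, dist x y ≤ δ} = 0 := by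
    have : minSpan X δ = 0 := by omega
    exact this
  rw [h0] at hcard
  obtain ⟨y, hy, -⟩ := hspan (Classical.arbitrary X)
  rw [Finset.card_eq_zero.mp hcard] at hy
  exact absurd hy (Finset.notMem_empty y)

/-- If `(X,d)` is a compact metric space of finite ball dimension `D` and `T : X → X` is
Lipschitz with constant `L`, then the topological entropy of `T` satisfies
`h_top(T) ≤ D · max 0 (log L)`. -/
theorem stmt_9 {X : Type*} [MetricSpace X] [CompactSpace X]
    (T : X → X) (L : NNReal) (hL : LipschitzWith L T)
    (hD : ballDim X ≠ ⊤) :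
    Dynamics.coverEntropy T Set.univ ≤ ballDim X * ((max 0 (Real.log L) : ℝ) : EReal) := by
  rcases isEmpty_or_nonempty X with hX | hX
  · rw [Set.univ_eq_empty_iff.mpr hX, Dynamics.coverEntropy_empty]
    exact bot_le
  set m : ℝ := max 0 (Real.log L) with hm
  have hm0 : (0 : ℝ) ≤ m := le_max_left _ _
  set M : ℝ := Real.exp m with hMdef
  have hM1 : (1 : ℝ) ≤ M := by
    rw [hMdef, ← Real.exp_zero]
    exact Real.exp_le_exp.2 hm0
  have hM0 : (0 : ℝ) < M := lt_of_lt_of_le one_pos hM1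
  have hLM : (L : ℝ) ≤ M := by
    rcases eq_or_lt_of_le (L.coe_nonneg) with h0 | h0
    · exact le_trans (le_of_eq h0.symm) (le_of_lt hM0)
    · calc (L : ℝ) = Real.exp (Real.log L) := (Real.exp_log h0).symm
        _ ≤ M := Real.exp_le_exp.2 (le_max_right _ _)
  -- Lipschitz bound for iterates
  have hiter : ∀ (k : ℕ) (x y : X), dist (T^[k] x) (T^[k] y) ≤ M ^ k * dist x y := by
    intro k x y
    calc dist (T^[k] x) (T^[k] y) ≤ (L ^ k : NNReal) * dist x y := (hL.iterate k).dist_le_mul x y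
      _ ≤ M ^ k * dist x y := by
          apply mul_le_mul_of_nonneg_right _ dist_nonneg
          push_cast
          exact pow_le_pow_left₀ L.coe_nonneg hLM k
  -- ballDim is a nonnegative real
  have hd0 : (0 : EReal) ≤ ballDim X := by
    apply le_limsup_of_frequently_le _ (by isBoundedDefault)
    apply Filter.Frequently.of_forall
    intro x
    have : (0 : ℝ) ≤ Real.log (minSpan X x) / |Real.log x| :=
      div_nonneg (Real.log_natCast_nonneg _) (abs_nonneg _)
    exact_mod_cast this
  set d : ℝ := (ballDim X).toReal with hdDef
  have hball : ballDim X = (d : EReal) := by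
    rw [hdDef, EReal.coe_toReal hD (fun h => by simp [h] at hd0)]
  have hd0' : (0 : ℝ) ≤ d := by
    have := hball ▸ hd0
    exact_mod_cast this
  -- reduce to entourages from the metric basis
  rw [Dynamics.coverEntropy_eq_iSup_basis Metric.uniformity_basis_dist, hball, ← EReal.coe_mul]
  apply iSup₂_le
  intro ε hε
  set U : Set (X × X) := {p : X × X | dist p.1 p.2 < ε} with hU
  -- key estimate for any real c > d
  have key : ∀ c : ℝ, d < c →
      Dynamics.coverEntropyEntourage T Set.univ U ≤ ((c * m : ℝ) : EReal) := by
    intro c hc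
    have hc0 : (0 : ℝ) ≤ c := le_of_lt (lt_of_le_of_lt hd0' hc)
    have hlt : ballDim X < (c : EReal) := by rw [hball]; exact_mod_cast hc
    have hev := Filter.eventually_lt_of_limsup_lt hlt
    rw [eventually_nhdsWithin_iff] at hev
    obtain ⟨r, hr, hrP⟩ := Metric.eventually_nhds_iff.mp hev
    set ρ : ℝ := min (min (ε / 2) (r / 2)) (1 / 2) with hρdef
    have hρ0 : 0 < ρ := by positivity
    have hρε : ρ ≤ ε / 2 := le_trans (min_le_left _ _) (min_le_left _ _)
    have hρr : ρ < r := lt_of_le_of_lt (le_trans (min_le_left _ _) (min_le_right _ _))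
      (by linarith)
    have hρ1 : ρ < 1 := lt_of_le_of_lt (min_le_right _ _) (by norm_num)
    set δ : ℕ → ℝ := fun n => ρ / M ^ n with hδdef
    have hδ0 : ∀ n, 0 < δ n := fun n => div_pos hρ0 (pow_pos hM0 n)
    have hδρ : ∀ n, δ n ≤ ρ := fun n => by
      rw [hδdef]
      exact div_le_self hρ0.le (one_le_pow₀ hM1)
    -- dimension-type bound at scale δ n
    have hdim : ∀ n : ℕ, Real.log (minSpan X (δ n)) ≤ c * (n * m + |Real.log ρ|) := by
      intro n
      have hmem : δ n ∈ Set.Ioi (0 : ℝ) := hδ0 n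
      have hdist : dist (δ n) (0 : ℝ) < r := by
        rw [Real.dist_eq, sub_zero, abs_of_pos (hδ0 n)]
        exact lt_of_le_of_lt (hδρ n) hρr
      have hflt : Real.log (minSpan X (δ n)) / |Real.log (δ n)| < c := by
        have := hrP hdist hmem
        exact_mod_cast this
      have hδlt1 : δ n < 1 := lt_of_le_of_lt (hδρ n) hρ1
      have hlogneg : Real.log (δ n) < 0 := Real.log_neg (hδ0 n) hδlt1
      have habs : 0 < |Real.log (δ n)| := abs_pos.mpr (ne_of_lt hlogneg)
      have h1 : Real.log (minSpan X (δ n)) ≤ c * |Real.log (δ n)| := by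
        have := (div_lt_iff₀ habs).mp hflt
        linarith
      have hlogδ : Real.log (δ n) = Real.log ρ - n * m := by
        rw [hδdef]
        rw [Real.log_div (ne_of_gt hρ0) (ne_of_gt (pow_pos hM0 n)), Real.log_pow,
          Real.log_exp]
      have h2 : |Real.log (δ n)| ≤ n * m + |Real.log ρ| := by
        rw [hlogδ]
        calc |Real.log ρ - n * m| ≤ |Real.log ρ| + |(n : ℝ) * m| := abs_sub _ _
          _ = |Real.log ρ| + n * m := by
              rw [abs_of_nonneg (mul_nonneg (Nat.cast_nonneg n) hm0)]
          _ = n * m + |Real.log ρ| := by ring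
      calc Real.log (minSpan X (δ n)) ≤ c * |Real.log (δ n)| := h1
        _ ≤ c * (n * m + |Real.log ρ|) := mul_le_mul_of_nonneg_left h2 hc0
    -- spanning sets at scale δ n give dynamical covers
    have hcover : ∀ n : ℕ,
        Dynamics.coverMincard T Set.univ U n ≤ (minSpan X (δ n) : ℕ∞) := by
      intro n
      obtain ⟨s, hcard, hspan, -⟩ := minSpan_spec X (hδ0 n)
      have hdyn : Dynamics.IsDynCoverOf T Set.univ U n (s : Set X) := by
        intro x _
        obtain ⟨y, hy, hxy⟩ := hspan x
        show ∃ y ∈ (s : Set X), (x, y) ∈ Dynamics.dynEntourage T U n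
        refine ⟨y, hy, ?_⟩
        rw [Dynamics.mem_dynEntourage]
        intro k hk
        show dist (T^[k] x) (T^[k] y) < ε
        rw [dist_comm]
        calc dist (T^[k] y) (T^[k] x) ≤ M ^ k * dist y x := hiter k y x
          _ ≤ M ^ n * dist y x := by
              apply mul_le_mul_of_nonneg_right _ dist_nonneg
              exact pow_le_pow_right₀ hM1 hk.le
          _ ≤ M ^ n * δ n := by
              apply mul_le_mul_of_nonneg_left _ (le_of_lt (pow_pos hM0 n))
              rw [dist_comm]; exact hxy
          _ = ρ := by
              rw [hδdef]
              field_simp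
          _ ≤ ε / 2 := hρε
          _ < ε := by linarith
      calc Dynamics.coverMincard T Set.univ U n ≤ (s.card : ℕ∞) := hdyn.coverMincard_le_card
        _ = (minSpan X (δ n) : ℕ∞) := by exact_mod_cast hcard
    -- pass to the entropy limsup
    set a : ℕ → ℝ := fun n => Real.log (minSpan X (δ n)) / n with hadef
    set b : ℕ → ℝ := fun n => c * m + c * |Real.log ρ| / n with hbdef
    have hab : ∀ n : ℕ, 1 ≤ n → a n ≤ b n := by
      intro n hn
      have hn0 : (0 : ℝ) < n := by exact_mod_cast hn
      rw [hadef, hbdef]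
      rw [div_le_iff₀ hn0]
      have := hdim n
      calc Real.log (minSpan X (δ n)) ≤ c * (n * m + |Real.log ρ|) := hdim n
        _ = (c * m + c * |Real.log ρ| / n) * n := by field_simp
    have hbtend : Filter.Tendsto (fun n : ℕ => ((b n : ℝ) : EReal)) atTop
        (nhds ((c * m : ℝ) : EReal)) := by
      rw [EReal.tendsto_coe]
      have : Filter.Tendsto b atTop (nhds (c * m + 0)) := by
        apply Filter.Tendsto.add tendsto_const_nhds
        exact tendsto_const_div_atTop_nhds_zero_nat (c * |Real.log ρ|)
      simpa using this
    calc Dynamics.coverEntropyEntourage T Set.univ U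
        ≤ limsup (fun n : ℕ => ((a n : ℝ) : EReal)) atTop := by
          refine Filter.limsup_le_limsup ?_
          filter_upwards [Filter.eventually_ge_atTop 1] with n hn
          have h1 : ENNReal.log (Dynamics.coverMincard T Set.univ U n)
              ≤ ENNReal.log ((minSpan X (δ n) : ℕ) : ENNReal) := by
            apply ENNReal.log_monotone
            exact_mod_cast hcover n
          have h2 : ENNReal.log ((minSpan X (δ n) : ℕ) : ENNReal)
              = ((Real.log (minSpan X (δ n)) : ℝ) : EReal) := by
            obtain ⟨-, -, -, h1'⟩ := minSpan_spec X (hδ0 n)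
            rw [ENNReal.log_pos_real (by exact_mod_cast Nat.one_le_iff_ne_zero.mp h1')
              (ENNReal.natCast_ne_top _), ENNReal.toReal_natCast]
          calc ENNReal.log (Dynamics.coverMincard T Set.univ U n) / (n : EReal)
              ≤ ENNReal.log ((minSpan X (δ n) : ℕ) : ENNReal) / (n : EReal) :=
                EReal.monotone_div_right_of_nonneg (Nat.cast_nonneg' n) h1
            _ = ((a n : ℝ) : EReal) := by
                rw [h2, hadef, ← EReal.coe_coe_eq_natCast, ← EReal.coe_div]
      _ ≤ limsup (fun n : ℕ => ((b n : ℝ) : EReal)) atTop := by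
          refine Filter.limsup_le_limsup ?_
          filter_upwards [Filter.eventually_ge_atTop 1] with n hn
          exact EReal.coe_le_coe_iff.mpr (hab n hn)
      _ = ((c * m : ℝ) : EReal) := hbtend.limsup_eq
  -- conclude by density
  apply le_of_forall_gt_imp_ge_of_dense
  intro z hz
  rcases eq_or_lt_of_le hm0 with hmz | hmz
  · have h1 := key (d + 1) (lt_add_one d)
    have : ((d + 1) * m : ℝ) = d * m := by rw [← hmz]; ring
    rw [this] at h1
    exact h1.trans (le_of_lt hz)
  · obtain ⟨w, hw1, hw2⟩ := EReal.exists_between_coe_real hz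
    have hdw : d * m < w := by exact_mod_cast hw1
    have hcd : d < w / m := (lt_div_iff₀ hmz).mpr hdw
    have h1 := key (w / m) hcd
    have : (w / m * m : ℝ) = w := div_mul_cancel₀ w (ne_of_gt hmz)
    rw [this] at h1
    exact h1.trans (le_of_lt hw2)
end

section
/- Let Γ be a countable group with an amenable subgroup Λ ≤ Γ of infinite index, let Γ ⟶^T (X,μ) be a pmp action, and suppose the restricted Λ-action has finite Kolmogorov–Sinai entropy h_μ(T_Λ) < ∞. Then the naive entropy of the Γ-action is zero: h^{naive}_μ(T) = 0. The key estimate: for any finite-entropy partition 𝒫 and any finite set F ⊂ Γ of distinct coset representatives of Γ/Λ, h^{naive}_μ(T,𝒫) ≤ h_μ(T_Λ)/|F|. -/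
open MeasureTheory Filter
open scoped ENNReal

/-- Shannon entropy (in `ℝ≥0∞`) of the countable partition given by the fibers of `f`. -/
noncomputable def Hent {X : Type*} [MeasurableSpace X] (μ : Measure X)
    {ι : Type*} [Countable ι] (f : X → ι) : ℝ≥0∞ :=
  ∑' i : ι, ENNReal.ofReal (Real.negMulLog (μ (f ⁻¹' {i})).toReal)

/-- The naive entropy of the action `T` with respect to the partition `f`:
`inf_W |W|⁻¹ H(⋁_{w∈W} (T^w)⁻¹ f)` over nonempty finite `W ⊆ Γ`. -/
noncomputable def naiveEntPart {Γ : Type*} [Group Γ] {X : Type*} [MeasurableSpace X]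
    (μ : Measure X) (T : Γ → X → X) {ι : Type*} [Countable ι] (f : X → ι) : ℝ≥0∞ :=
  ⨅ W : {W : Finset Γ // W.Nonempty},
    Hent μ (fun x (w : (W : Finset Γ)) => f (T (w : Γ) x)) / ((W : Finset Γ).card : ℝ≥0∞)


open Real

lemma negMulLog_le_aux {p a b : ℝ} (hp : 0 ≤ p) (hpa : p ≤ a) (hpb : p ≤ b)
    (ha : a ≤ 1) (hb : b ≤ 1) :
    Real.negMulLog p ≤ p * (-Real.log a) + p * (-Real.log b) + a * b := by
  rcases eq_or_lt_of_le hp with h0 | h0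
  · simp only [← h0, negMulLog_zero]
    have : (0:ℝ) ≤ a * b := mul_nonneg (hp.trans hpa) (hp.trans hpb)
    simp; linarith
  · have ha0 : 0 < a := lt_of_lt_of_le h0 hpa
    have hb0 : 0 < b := lt_of_lt_of_le h0 hpb
    have h1 : Real.log (a*b/p) ≤ a*b/p - 1 := Real.log_le_sub_one_of_pos (by positivity)
    have h2 : p * Real.log (a*b/p) ≤ a*b - p := by
      have := mul_le_mul_of_nonneg_left h1 hp
      calc p * Real.log (a*b/p) ≤ p * (a*b/p - 1) := this
        _ = a*b - p := by field_simp
    have h3 : Real.log (a*b/p) = Real.log a + Real.log b - Real.log p := by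
      rw [Real.log_div (by positivity) (ne_of_gt h0), Real.log_mul (ne_of_gt ha0) (ne_of_gt hb0)]
    rw [h3] at h2
    have : 0 ≤ p := hp
    simp only [Real.negMulLog]
    nlinarith [h2]

lemma hent_comp_inj {X ι κ : Type*} [MeasurableSpace X] (μ : Measure X) [Countable ι] [Countable κ]
    {e : ι → κ} (he : Function.Injective e) (F : X → ι) :
    Hent μ (fun x => e (F x)) = Hent μ F := by
  unfold Hent
  rw [← he.tsum_eq]
  · apply tsum_congr
    intro i
    have : (fun x => e (F x)) ⁻¹' {e i} = F ⁻¹' {i} := by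
      ext x; simp [he.eq_iff]
    rw [this]
  · intro k hk
    by_contra hr
    apply hk
    have : (fun x => e (F x)) ⁻¹' {k} = ∅ := by
      ext x
      simp only [Set.mem_preimage, Set.mem_singleton_iff, Set.mem_empty_iff_false, iff_false]
      intro h
      exact hr ⟨F x, h⟩
    simp [this]

lemma hent_comp_mp {X ι : Type*} [MeasurableSpace X] {μ : Measure X} [Countable ι]
    {S : X → X} (hS : MeasurePreserving S μ μ) {f : X → ι}
    (hf : ∀ i, MeasurableSet (f ⁻¹' {i})) :
    Hent μ (fun x => f (S x)) = Hent μ f := by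
  unfold Hent
  apply tsum_congr
  intro i
  have : (fun x => f (S x)) ⁻¹' {i} = S ⁻¹' (f ⁻¹' {i}) := rfl
  rw [this, hS.measure_preimage (hf i).nullMeasurableSet]

lemma tsum_measure_inter_fiber {X ι : Type*} [MeasurableSpace X] (μ : Measure X)
    [Countable ι] {g : X → ι} (hg : ∀ j, MeasurableSet (g ⁻¹' {j})) {s : Set X}
    (hs : MeasurableSet s) : ∑' j, μ (s ∩ g ⁻¹' {j}) = μ s := by
  rw [← measure_iUnion (fun i j hij => by
        apply Set.disjoint_left.mpr
        rintro x ⟨-, hxi⟩ ⟨-, hxj⟩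
        exact hij (hxi.symm.trans hxj))
      (fun j => hs.inter (hg j))]
  congr 1
  ext x
  simp only [Set.mem_iUnion, Set.mem_inter_iff, Set.mem_preimage, Set.mem_singleton_iff]
  exact ⟨fun ⟨j, h, _⟩ => h, fun h => ⟨g x, h, rfl⟩⟩

lemma tsum_measure_fiber {X ι : Type*} [MeasurableSpace X] (μ : Measure X)
    [Countable ι] {g : X → ι} (hg : ∀ j, MeasurableSet (g ⁻¹' {j})) :
    ∑' j, μ (g ⁻¹' {j}) = μ Set.univ := by
  have := tsum_measure_inter_fiber μ hg (s := Set.univ) MeasurableSet.univ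
  simpa using this

lemma negMulLog_le_aux' {p a b : ℝ} (hp : 0 ≤ p) (hpa : p ≤ a) (hpb : p ≤ b) :
    Real.negMulLog p ≤ p * (-Real.log a) + p * (-Real.log b) + a * b := by
  rcases eq_or_lt_of_le hp with h0 | h0
  · simp only [← h0, negMulLog_zero]
    have : (0:ℝ) ≤ a * b := mul_nonneg (hp.trans hpa) (hp.trans hpb)
    simp only [zero_mul, zero_add]
    linarith
  · have ha0 : 0 < a := lt_of_lt_of_le h0 hpa
    have hb0 : 0 < b := lt_of_lt_of_le h0 hpb
    have h1 : Real.log (a*b/p) ≤ a*b/p - 1 := Real.log_le_sub_one_of_pos (by positivity)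
    have h2 : p * Real.log (a*b/p) ≤ a*b - p := by
      have := mul_le_mul_of_nonneg_left h1 hp
      calc p * Real.log (a*b/p) ≤ p * (a*b/p - 1) := this
        _ = a*b - p := by field_simp
    have h3 : Real.log (a*b/p) = Real.log a + Real.log b - Real.log p := by
      rw [Real.log_div (by positivity) (ne_of_gt h0), Real.log_mul (ne_of_gt ha0) (ne_of_gt hb0)]
    rw [h3] at h2
    simp only [Real.negMulLog]
    nlinarith [h2]

lemma hent_pair_le {X ι κ : Type*} [MeasurableSpace X] (μ : Measure X) [IsProbabilityMeasure μ]
    [Countable ι] [Countable κ] {f : X → ι} {g : X → κ}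
    (hf : ∀ i, MeasurableSet (f ⁻¹' {i})) (hg : ∀ j, MeasurableSet (g ⁻¹' {j})) :
    Hent μ (fun x => (f x, g x)) ≤ Hent μ f + Hent μ g + 1 := by
  have hfib : ∀ p : ι × κ, (fun x => (f x, g x)) ⁻¹' {p} = f ⁻¹' {p.1} ∩ g ⁻¹' {p.2} := by
    intro p; ext x; simp [Prod.ext_iff]
  have hAlt : ∀ i, (μ (f ⁻¹' {i})).toReal ≤ 1 := by
    intro i
    exact ENNReal.toReal_le_of_le_ofReal one_pos.le (by simpa using prob_le_one)
  have hBlt : ∀ j, (μ (g ⁻¹' {j})).toReal ≤ 1 := by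
    intro j
    exact ENNReal.toReal_le_of_le_ofReal one_pos.le (by simpa using prob_le_one)
  have key : ∀ p : ι × κ,
      ENNReal.ofReal (negMulLog (μ (f ⁻¹' {p.1} ∩ g ⁻¹' {p.2})).toReal) ≤
        μ (f ⁻¹' {p.1} ∩ g ⁻¹' {p.2}) * ENNReal.ofReal (-Real.log (μ (f ⁻¹' {p.1})).toReal)
        + μ (f ⁻¹' {p.1} ∩ g ⁻¹' {p.2}) * ENNReal.ofReal (-Real.log (μ (g ⁻¹' {p.2})).toReal)
        + μ (f ⁻¹' {p.1}) * μ (g ⁻¹' {p.2}) := by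
    rintro ⟨i, j⟩
    set p' := (μ (f ⁻¹' {i} ∩ g ⁻¹' {j})).toReal with hp'
    set a := (μ (f ⁻¹' {i})).toReal with ha
    set b := (μ (g ⁻¹' {j})).toReal with hb
    have hp0 : 0 ≤ p' := ENNReal.toReal_nonneg
    have hpa : p' ≤ a := ENNReal.toReal_mono (measure_ne_top μ _)
      (measure_mono Set.inter_subset_left)
    have hpb : p' ≤ b := ENNReal.toReal_mono (measure_ne_top μ _)
      (measure_mono Set.inter_subset_right)
    have hmain := negMulLog_le_aux' hp0 hpa hpb
    calc ENNReal.ofReal (negMulLog p')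
        ≤ ENNReal.ofReal (p' * (-Real.log a) + p' * (-Real.log b) + a * b) :=
          ENNReal.ofReal_le_ofReal hmain
      _ ≤ ENNReal.ofReal (p' * (-Real.log a) + p' * (-Real.log b)) + ENNReal.ofReal (a * b) :=
          ENNReal.ofReal_add_le
      _ ≤ ENNReal.ofReal (p' * (-Real.log a)) + ENNReal.ofReal (p' * (-Real.log b))
          + ENNReal.ofReal (a * b) := by
          gcongr
          exact ENNReal.ofReal_add_le
      _ = μ (f ⁻¹' {i} ∩ g ⁻¹' {j}) * ENNReal.ofReal (-Real.log a)
          + μ (f ⁻¹' {i} ∩ g ⁻¹' {j}) * ENNReal.ofReal (-Real.log b)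
          + μ (f ⁻¹' {i}) * μ (g ⁻¹' {j}) := by
          rw [ENNReal.ofReal_mul hp0, ENNReal.ofReal_mul hp0,
            ENNReal.ofReal_mul ENNReal.toReal_nonneg,
            ENNReal.ofReal_toReal (measure_ne_top μ _), ENNReal.ofReal_toReal (measure_ne_top μ _),
            ENNReal.ofReal_toReal (measure_ne_top μ _)]
  have hC : ∀ (s : Set X), μ s ≠ ⊤ → (μ s).toReal ≤ 1 →
      μ s * ENNReal.ofReal (-Real.log (μ s).toReal) =
        ENNReal.ofReal (negMulLog (μ s).toReal) := by
    intro s hs hs1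
    nth_rewrite 1 [← ENNReal.ofReal_toReal hs]
    rw [← ENNReal.ofReal_mul ENNReal.toReal_nonneg]
    congr 1
    simp only [Real.negMulLog]
    ring
  calc Hent μ (fun x => (f x, g x))
      = ∑' p : ι × κ, ENNReal.ofReal (negMulLog (μ (f ⁻¹' {p.1} ∩ g ⁻¹' {p.2})).toReal) := by
        unfold Hent; exact tsum_congr fun p => by rw [hfib]
    _ ≤ ∑' p : ι × κ,
        (μ (f ⁻¹' {p.1} ∩ g ⁻¹' {p.2}) * ENNReal.ofReal (-Real.log (μ (f ⁻¹' {p.1})).toReal)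
        + μ (f ⁻¹' {p.1} ∩ g ⁻¹' {p.2}) * ENNReal.ofReal (-Real.log (μ (g ⁻¹' {p.2})).toReal)
        + μ (f ⁻¹' {p.1}) * μ (g ⁻¹' {p.2})) := ENNReal.tsum_le_tsum key
    _ = (∑' p : ι × κ,
          μ (f ⁻¹' {p.1} ∩ g ⁻¹' {p.2}) * ENNReal.ofReal (-Real.log (μ (f ⁻¹' {p.1})).toReal))
        + (∑' p : ι × κ,
          μ (f ⁻¹' {p.1} ∩ g ⁻¹' {p.2}) * ENNReal.ofReal (-Real.log (μ (g ⁻¹' {p.2})).toReal))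
        + (∑' p : ι × κ, μ (f ⁻¹' {p.1}) * μ (g ⁻¹' {p.2})) := by
        rw [ENNReal.tsum_add, ENNReal.tsum_add]
    _ = Hent μ f + Hent μ g + 1 := by
        congr 1
        · congr 1
          · -- T1
            rw [ENNReal.tsum_prod']
            unfold Hent
            apply tsum_congr
            intro i
            simp only
            rw [ENNReal.tsum_mul_right, tsum_measure_inter_fiber μ hg (hf i)]
            exact hC _ (measure_ne_top μ _) (hAlt i)
          · -- T2
            rw [ENNReal.tsum_prod', ENNReal.tsum_comm]
            unfold Hent
            apply tsum_congr
            intro j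
            simp only
            rw [ENNReal.tsum_mul_right]
            have : ∑' i, μ (f ⁻¹' {i} ∩ g ⁻¹' {j}) = μ (g ⁻¹' {j}) := by
              rw [show (fun i => μ (f ⁻¹' {i} ∩ g ⁻¹' {j})) = fun i => μ (g ⁻¹' {j} ∩ f ⁻¹' {i})
                from funext fun i => by rw [Set.inter_comm]]
              exact tsum_measure_inter_fiber μ hf (hg j)
            rw [this]
            exact hC _ (measure_ne_top μ _) (hBlt j)
        · -- T3
          rw [ENNReal.tsum_prod']
          simp only [ENNReal.tsum_mul_left, ENNReal.tsum_mul_right]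
          rw [tsum_measure_fiber μ hf, tsum_measure_fiber μ hg]
          simp

lemma pi_fiber_measurable {X G : Type*} [MeasurableSpace X] (s : Finset G) (f : G → X → ℕ)
    (hmeas : ∀ g ∈ s, ∀ i : ℕ, MeasurableSet ((f g) ⁻¹' {i})) :
    ∀ u : ↥s → ℕ, MeasurableSet ((fun x (g : ↥s) => f g x) ⁻¹' {u}) := by
  intro u
  have : (fun x (g : ↥s) => f g x) ⁻¹' {u} = ⋂ g : ↥s, (f g) ⁻¹' {u g} := by
    ext x
    simp [funext_iff]
  rw [this]
  exact MeasurableSet.iInter fun g => hmeas g g.2 (u g)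

lemma hent_pi_lt_top {X G : Type*} [MeasurableSpace X] (μ : Measure X) [IsProbabilityMeasure μ]
    [DecidableEq G] (s : Finset G) (f : G → X → ℕ)
    (hmeas : ∀ g ∈ s, ∀ i : ℕ, MeasurableSet ((f g) ⁻¹' {i}))
    (hfin : ∀ g ∈ s, Hent μ (f g) < ⊤) :
    Hent μ (fun x (g : ↥s) => f g x) < ⊤ := by
  classical
  induction s using Finset.induction_on with
  | empty =>
    have hU : Unique (↥(∅ : Finset G) → ℕ) := by
      exact Pi.uniqueOfIsEmpty _
    unfold Hent
    rw [tsum_eq_single (hU.default) (fun b hb => absurd (hU.uniq b) hb)]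
    have : (fun x (g : ↥(∅ : Finset G)) => f g x) ⁻¹' {hU.default} = Set.univ := by
      ext x
      simp only [Set.mem_preimage, Set.mem_singleton_iff, Set.mem_univ, iff_true]
      exact hU.uniq _
    rw [this]
    simp
  | @insert a t ha ih =>
    have hmem_a : a ∈ insert a t := Finset.mem_insert_self a t
    set e : (↥(insert a t) → ℕ) → ℕ × (↥t → ℕ) :=
      fun u => (u ⟨a, hmem_a⟩, fun g => u ⟨g, Finset.mem_insert_of_mem g.2⟩) with he_def
    have he : Function.Injective e := by
      intro u v huv
      funext ⟨g, hg⟩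
      rcases Finset.mem_insert.mp hg with rfl | hgt
      · exact congrArg Prod.fst huv
      · exact congrFun (congrArg Prod.snd huv) ⟨g, hgt⟩
    have hrw : Hent μ (fun x (g : ↥(insert a t)) => f g x)
        = Hent μ (fun x => (f a x, fun g : ↥t => f g x)) := by
      rw [← hent_comp_inj μ he (fun x (g : ↥(insert a t)) => f g x)]
    rw [hrw]
    have h1 := hent_pair_le μ (f := f a) (g := fun x (g : ↥t) => f g x)
      (fun i => hmeas a hmem_a i)
      (pi_fiber_measurable t f (fun g hg => hmeas g (Finset.mem_insert_of_mem hg)))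
    refine lt_of_le_of_lt h1 ?_
    have h2 := ih (fun g hg => hmeas g (Finset.mem_insert_of_mem hg))
      (fun g hg => hfin g (Finset.mem_insert_of_mem hg))
    have h3 := hfin a hmem_a
    exact ENNReal.add_lt_top.mpr ⟨ENNReal.add_lt_top.mpr ⟨h3, h2⟩, ENNReal.one_lt_top⟩

/-- Let `Λ ≤ Γ` be an amenable subgroup (witnessed by a Følner sequence `Φ`) of infinite
index, and suppose the restricted `Λ`-action has finite Kolmogorov–Sinai entropy (defined
via Følner averages).  Then (key estimate) for every finite-entropy partition `f` and
every finite set `F` of distinct coset representatives of `Γ/Λ`,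
`h^{naive}(T,f) ≤ h_μ(T_Λ)/|F|`; consequently the naive entropy of the `Γ`-action
vanishes. -/
theorem stmt_10 {Γ : Type*} [Group Γ] [Countable Γ] [DecidableEq Γ]
    {X : Type*} [MeasurableSpace X] (μ : Measure X) [IsProbabilityMeasure μ]
    (T : Γ → X → X) (hTmp : ∀ g, MeasurePreserving (T g) μ μ)
    (hT1 : ∀ x, T 1 x = x) (hTmul : ∀ g h x, T (g * h) x = T g (T h x))
    (Λ : Subgroup Γ) (hΛinf : Λ.index = 0)
    (Φ : ℕ → Finset Γ) (hΦΛ : ∀ n, ∀ g ∈ Φ n, g ∈ Λ) (hΦne : ∀ n, (Φ n).Nonempty)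
    (hFolner : ∀ g ∈ Λ, Tendsto
      (fun n => ((((Φ n).image (fun x => g * x)) \ (Φ n)).card : ℝ) / ((Φ n).card : ℝ))
      atTop (nhds 0))
    (hfin : (⨆ (f : X → ℕ) (_ : Measurable f) (_ : Hent μ f < ⊤),
        liminf (fun n => Hent μ (fun x (w : (Φ n : Finset Γ)) => f (T (w : Γ) x)) /
          ((Φ n).card : ℝ≥0∞)) atTop) < ⊤) :
    (∀ f : X → ℕ, Measurable f → Hent μ f < ⊤ →
      ∀ F : Finset Γ, F.Nonempty →
        (∀ x ∈ F, ∀ y ∈ F, x⁻¹ * y ∈ Λ → x = y) →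
        naiveEntPart μ T f ≤
          (⨆ (f' : X → ℕ) (_ : Measurable f') (_ : Hent μ f' < ⊤),
            liminf (fun n => Hent μ (fun x (w : (Φ n : Finset Γ)) => f' (T (w : Γ) x)) /
              ((Φ n).card : ℝ≥0∞)) atTop) / (F.card : ℝ≥0∞)) ∧
    (⨆ (f : X → ℕ) (_ : Measurable f) (_ : Hent μ f < ⊤), naiveEntPart μ T f) = 0 := by
  classical
  set S : ℝ≥0∞ := ⨆ (f : X → ℕ) (_ : Measurable f) (_ : Hent μ f < ⊤),
      liminf (fun n => Hent μ (fun x (w : (Φ n : Finset Γ)) => f (T (w : Γ) x)) /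
        ((Φ n).card : ℝ≥0∞)) atTop with hS
  -- the key estimate
  have key : ∀ f : X → ℕ, Measurable f → Hent μ f < ⊤ →
      ∀ F : Finset Γ, F.Nonempty →
        (∀ x ∈ F, ∀ y ∈ F, x⁻¹ * y ∈ Λ → x = y) →
        naiveEntPart μ T f * (F.card : ℝ≥0∞) ≤ S := by
    intro f hf hfent F hFne hFrep
    have hfib : ∀ i : ℕ, MeasurableSet (f ⁻¹' {i}) := fun i => hf (measurableSet_singleton i)
    set Q : X → (↥F → ℕ) := fun x (g : ↥F) => f (T (g : Γ) x) with hQ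
    have hTfib : ∀ g ∈ F, ∀ i : ℕ, MeasurableSet ((fun x => f (T g x)) ⁻¹' {i}) :=
      fun g _ i => (hTmp g).measurable (hfib i)
    have hQfib : ∀ u : ↥F → ℕ, MeasurableSet (Q ⁻¹' {u}) :=
      pi_fiber_measurable F (fun g x => f (T g x)) hTfib
    have hQfin : Hent μ Q < ⊤ :=
      hent_pi_lt_top μ F (fun g x => f (T g x)) hTfib
        (fun g _ => by rw [hent_comp_mp (hTmp g) hfib]; exact hfent)
    obtain ⟨enc, henc⟩ := Countable.exists_injective_nat (↥F → ℕ)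
    set f' : X → ℕ := fun x => enc (Q x) with hf'def
    have hf'meas : Measurable f' := by
      apply measurable_to_countable'
      intro n
      by_cases h : ∃ u, enc u = n
      · obtain ⟨u, rfl⟩ := h
        have : f' ⁻¹' {enc u} = Q ⁻¹' {u} := by
          ext x; simp [hf'def, henc.eq_iff]
        rw [this]; exact hQfib u
      · have : f' ⁻¹' {n} = ∅ := by
          ext x
          simp only [Set.mem_preimage, Set.mem_singleton_iff, Set.mem_empty_iff_false, iff_false]
          exact fun hx => h ⟨Q x, hx⟩
        rw [this]; exact MeasurableSet.empty
    have hf'fin : Hent μ f' < ⊤ := by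
      have : Hent μ f' = Hent μ Q := hent_comp_inj μ henc Q
      rw [this]; exact hQfin
    -- the Følner-window sets
    set W : ℕ → Finset Γ := fun n => (F ×ˢ Φ n).image (fun p : Γ × Γ => p.1 * p.2) with hW
    have hWinj : ∀ n, Set.InjOn (fun p : Γ × Γ => p.1 * p.2) ((F ×ˢ Φ n : Finset (Γ × Γ)) : Set (Γ × Γ)) := by
      intro n p hp q hq hpq
      rw [Finset.mem_coe, Finset.mem_product] at hp hq
      have hΛp : p.2 ∈ Λ := hΦΛ n p.2 hp.2
      have hΛq : q.2 ∈ Λ := hΦΛ n q.2 hq.2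
      have hmul : p.1 * p.2 = q.1 * q.2 := hpq
      have h1 : p.1⁻¹ * q.1 = p.2 * q.2⁻¹ := by
        calc p.1⁻¹ * q.1 = p.1⁻¹ * (q.1 * q.2) * q.2⁻¹ := by group
          _ = p.1⁻¹ * (p.1 * p.2) * q.2⁻¹ := by rw [hmul]
          _ = p.2 * q.2⁻¹ := by group
      have h2 : p.1⁻¹ * q.1 ∈ Λ := by
        rw [h1]; exact Λ.mul_mem hΛp (Λ.inv_mem hΛq)
      have h3 : p.1 = q.1 := hFrep p.1 hp.1 q.1 hq.1 h2
      have h4 : p.2 = q.2 := by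
        rw [h3] at hmul
        exact mul_left_cancel hmul
      exact Prod.ext h3 h4
    have hWcard : ∀ n, (W n).card = F.card * (Φ n).card := by
      intro n
      rw [hW]
      simp only
      rw [Finset.card_image_of_injOn (hWinj n), Finset.card_product]
    have hWne : ∀ n, (W n).Nonempty := fun n => (hFne.product (hΦne n)).image _
    have hmemW : ∀ n (g : ↥F) (k : ↥(Φ n)), (g : Γ) * (k : Γ) ∈ W n := by
      intro n g k
      rw [hW]
      exact Finset.mem_image.mpr ⟨((g : Γ), (k : Γ)),
        Finset.mem_product.mpr ⟨g.2, k.2⟩, rfl⟩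
    -- Hent equality per n
    have hHW : ∀ n, Hent μ (fun x (w : ↥(W n)) => f (T (w : Γ) x))
        = Hent μ (fun x (k : ↥(Φ n)) => f' (T (k : Γ) x)) := by
      intro n
      -- step A : f' joined = Q joined
      have e1inj : Function.Injective (fun (v : ↥(Φ n) → (↥F → ℕ)) (k : ↥(Φ n)) => enc (v k)) :=
        fun u v h => funext fun k => henc (congrFun h k)
      have stepA : Hent μ (fun x (k : ↥(Φ n)) => f' (T (k : Γ) x))
          = Hent μ (fun x (k : ↥(Φ n)) => Q (T (k : Γ) x)) :=
        hent_comp_inj μ e1inj (fun x (k : ↥(Φ n)) => Q (T (k : Γ) x))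
      -- step B
      set e2 : (↥(W n) → ℕ) → (↥(Φ n) → ↥F → ℕ) :=
        fun u k g => u ⟨(g : Γ) * (k : Γ), hmemW n g k⟩ with he2
      have e2inj : Function.Injective e2 := by
        intro u v h
        funext ⟨w, hw⟩
        rw [hW] at hw
        obtain ⟨⟨g, k⟩, hp, hw'⟩ := Finset.mem_image.mp hw
        obtain ⟨hg, hk⟩ := Finset.mem_product.mp hp
        have := congrFun (congrFun h ⟨k, hk⟩) ⟨g, hg⟩
        simp only [he2] at this
        have heq : (⟨w, hw⟩ : ↥(W n)) = ⟨g * k, hmemW n ⟨g, hg⟩ ⟨k, hk⟩⟩ :=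
          Subtype.ext hw'.symm
        rw [heq]
        exact this
      have stepB : Hent μ (fun x => e2 (fun w : ↥(W n) => f (T (w : Γ) x)))
          = Hent μ (fun x (w : ↥(W n)) => f (T (w : Γ) x)) :=
        hent_comp_inj μ e2inj (fun x (w : ↥(W n)) => f (T (w : Γ) x))
      have stepC : (fun x => e2 (fun w : ↥(W n) => f (T (w : Γ) x)))
          = (fun x (k : ↥(Φ n)) => Q (T (k : Γ) x)) := by
        funext x k g
        simp only [he2, hQ]
        rw [hTmul]
      rw [← stepB, stepC, stepA]
    -- per-n bound
    have hbound : ∀ n, naiveEntPart μ T f * (F.card : ℝ≥0∞) ≤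
        Hent μ (fun x (k : ↥(Φ n)) => f' (T (k : Γ) x)) / ((Φ n).card : ℝ≥0∞) := by
      intro n
      have hΦc0 : ((Φ n).card : ℝ≥0∞) ≠ 0 := by
        simp [Finset.card_ne_zero_of_mem (hΦne n).choose_spec]
      have hΦcT : ((Φ n).card : ℝ≥0∞) ≠ ⊤ := ENNReal.natCast_ne_top _
      have hFc0 : (F.card : ℝ≥0∞) ≠ 0 := by
        simp [Finset.card_ne_zero_of_mem hFne.choose_spec]
      have hFcT : (F.card : ℝ≥0∞) ≠ ⊤ := ENNReal.natCast_ne_top _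
      have h4 : naiveEntPart μ T f ≤
          Hent μ (fun x (w : ↥(W n)) => f (T (w : Γ) x)) / ((W n).card : ℝ≥0∞) :=
        iInf_le _ (⟨W n, hWne n⟩ : {W : Finset Γ // W.Nonempty})
      rw [hHW n, hWcard n] at h4
      have h5 : naiveEntPart μ T f * ((F.card * (Φ n).card : ℕ) : ℝ≥0∞) ≤
          Hent μ (fun x (k : ↥(Φ n)) => f' (T (k : Γ) x)) := by
        refine (ENNReal.le_div_iff_mul_le (Or.inl ?_) (Or.inl ?_)).mp h4
        · push_cast
          exact mul_ne_zero hFc0 hΦc0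
        · exact ENNReal.natCast_ne_top _
      rw [ENNReal.le_div_iff_mul_le (Or.inl hΦc0) (Or.inl hΦcT)]
      calc naiveEntPart μ T f * (F.card : ℝ≥0∞) * ((Φ n).card : ℝ≥0∞)
          = naiveEntPart μ T f * ((F.card * (Φ n).card : ℕ) : ℝ≥0∞) := by
            push_cast; ring
        _ ≤ _ := h5
    -- pass to liminf
    have hliminf : naiveEntPart μ T f * (F.card : ℝ≥0∞) ≤
        liminf (fun n => Hent μ (fun x (w : (Φ n : Finset Γ)) => f' (T (w : Γ) x)) /
          ((Φ n).card : ℝ≥0∞)) atTop := by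
      rw [liminf_eq_iSup_iInf_of_nat]
      refine le_iSup_of_le 0 ?_
      exact le_iInf fun i => le_iInf fun _ => hbound i
    refine hliminf.trans ?_
    rw [hS]
    calc liminf (fun n => Hent μ (fun x (w : (Φ n : Finset Γ)) => f' (T (w : Γ) x)) /
          ((Φ n).card : ℝ≥0∞)) atTop
        ≤ ⨆ (_ : Hent μ f' < ⊤), liminf (fun n =>
            Hent μ (fun x (w : (Φ n : Finset Γ)) => f' (T (w : Γ) x)) /
            ((Φ n).card : ℝ≥0∞)) atTop := le_iSup (fun _ => _) hf'fin
      _ ≤ ⨆ (_ : Measurable f') (_ : Hent μ f' < ⊤), liminf (fun n =>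
            Hent μ (fun x (w : (Φ n : Finset Γ)) => f' (T (w : Γ) x)) /
            ((Φ n).card : ℝ≥0∞)) atTop := le_iSup (fun _ => _) hf'meas
      _ ≤ _ := le_iSup (fun f'' : X → ℕ => ⨆ (_ : Measurable f'') (_ : Hent μ f'' < ⊤),
            liminf (fun n => Hent μ (fun x (w : (Φ n : Finset Γ)) => f'' (T (w : Γ) x)) /
            ((Φ n).card : ℝ≥0∞)) atTop) f'
  constructor
  · intro f hf hfent F hFne hFrep
    have hFc0 : (F.card : ℝ≥0∞) ≠ 0 := by
      simp [Finset.card_ne_zero_of_mem hFne.choose_spec]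
    have hFcT : (F.card : ℝ≥0∞) ≠ ⊤ := ENNReal.natCast_ne_top _
    exact (ENNReal.le_div_iff_mul_le (Or.inl hFc0) (Or.inl hFcT)).mpr
      (key f hf hfent F hFne hFrep)
  · refine le_antisymm ?_ zero_le
    refine iSup_le fun f => iSup_le fun hf => iSup_le fun hfent => ?_
    by_contra hne'
    rw [not_le] at hne'
    have hne : naiveEntPart μ T f ≠ 0 := hne'.ne'
    -- naive ≤ S hence finite
    have hone : naiveEntPart μ T f ≤ S := by
      have h1 := key f hf hfent {1} (Finset.singleton_nonempty 1)
        (fun x hx y hy _ => by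
          simp only [Finset.mem_singleton] at hx hy; rw [hx, hy])
      simpa using h1
    have hnt : naiveEntPart μ T f ≠ ⊤ := (lt_of_le_of_lt hone hfin).ne
    obtain ⟨m, hm⟩ := ENNReal.exists_nat_gt (ENNReal.div_lt_top hfin.ne hne).ne
    have hm0 : m ≠ 0 := by
      rintro rfl
      simp at hm
    -- build a Finset of m distinct coset representatives
    have hquot : Infinite (Γ ⧸ Λ) := by
      rcases Nat.card_eq_zero.mp hΛinf with h | h
      · exact h.elim (QuotientGroup.mk (1 : Γ))
      · exact h
    set emb := Infinite.natEmbedding (Γ ⧸ Λ) with hemb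
    set sq : Finset (Γ ⧸ Λ) := (Finset.range m).map emb with hsq
    have houtinj : Function.Injective (Quotient.out : Γ ⧸ Λ → Γ) := by
      intro q q' h
      rw [← QuotientGroup.out_eq' q, ← QuotientGroup.out_eq' q', h]
    set F : Finset Γ := sq.image Quotient.out with hF
    have hFcard : F.card = m := by
      rw [hF, Finset.card_image_of_injective _ houtinj, hsq, Finset.card_map,
        Finset.card_range]
    have hFne : F.Nonempty := by
      rw [← Finset.card_pos, hFcard]
      exact Nat.pos_of_ne_zero hm0
    have hFrep : ∀ x ∈ F, ∀ y ∈ F, x⁻¹ * y ∈ Λ → x = y := by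
      intro x hx y hy hxy
      obtain ⟨qx, _, rfl⟩ := Finset.mem_image.mp hx
      obtain ⟨qy, _, rfl⟩ := Finset.mem_image.mp hy
      have : (QuotientGroup.mk qx.out : Γ ⧸ Λ) = QuotientGroup.mk qy.out :=
        QuotientGroup.eq.mpr hxy
      rw [QuotientGroup.out_eq', QuotientGroup.out_eq'] at this
      rw [this]
    have h1 := key f hf hfent F hFne hFrep
    rw [hFcard] at h1
    have h2 : S < (m : ℝ≥0∞) * naiveEntPart μ T f :=
      (ENNReal.div_lt_iff (Or.inl hne) (Or.inl hnt)).mp hm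
    rw [mul_comm] at h2
    exact absurd (lt_of_lt_of_le h2 h1) (lt_irrefl S)
end

section
/- Let F_r = ⟨s₁,…,s_r⟩ and let 𝐗 = (X_g) be the Ising Markov chain over F_r with state space {−1,1}: P(X_e = −1) = P(X_e = 1) = 1/2 and P(X_e = k | X_s = k) = 1−ε for all generators and inverse generators s. Then its f-invariant equals f(𝐗) = −(r−1) log 2 − r ε log ε − r(1−ε) log(1−ε). In particular, for r ≥ 2 and ε > 0 sufficiently small, f(𝐗) < 0. -/
/-- The `f`-invariant of the Ising Markov chain over `F_r` with flip probability `ε`: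
with `H(X_e) = H(1/2,1/2)` and `H(X_e,X_s)` the entropy of the joint distribution
`((1−ε)/2, (1−ε)/2, ε/2, ε/2)`, the formula
`f = H(X_e) + ∑_{i=1}^r (H(X_e,X_{s_i}) − 2H(X_e))` evaluates to
`−(r−1) log 2 − r ε log ε − r (1−ε) log (1−ε)`; and for `r ≥ 2` this is negative for
all sufficiently small `ε > 0`. -/
theorem stmt_14 (r : ℕ) :
    (∀ ε : ℝ, 0 < ε → ε < 1 →
      (Real.negMulLog (1 / 2) + Real.negMulLog (1 / 2)) +
          ∑ _i : Fin r,
            ((2 * Real.negMulLog ((1 - ε) / 2) + 2 * Real.negMulLog (ε / 2)) -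
              2 * (Real.negMulLog (1 / 2) + Real.negMulLog (1 / 2)))
        = -((r : ℝ) - 1) * Real.log 2 - r * ε * Real.log ε -
            r * (1 - ε) * Real.log (1 - ε)) ∧
    (2 ≤ r → ∃ ε₀ > (0 : ℝ), ∀ ε : ℝ, 0 < ε → ε < ε₀ →
      -((r : ℝ) - 1) * Real.log 2 - r * ε * Real.log ε -
          r * (1 - ε) * Real.log (1 - ε) < 0) := by
  constructor
  · intro ε hε hε1
    have h1 : Real.log (1 / 2 : ℝ) = -Real.log 2 := by
      rw [Real.log_div one_ne_zero two_ne_zero, Real.log_one]; ring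
    have h2 : Real.log ((1 - ε) / 2) = Real.log (1 - ε) - Real.log 2 :=
      Real.log_div (by linarith) two_ne_zero
    have h3 : Real.log (ε / 2) = Real.log ε - Real.log 2 :=
      Real.log_div (ne_of_gt hε) two_ne_zero
    simp only [Real.negMulLog, Finset.sum_const, Finset.card_univ, Fintype.card_fin,
      nsmul_eq_mul, h1, h2, h3]
    ring
  · intro hr
    set f : ℝ → ℝ := fun ε => -((r : ℝ) - 1) * Real.log 2 + r * Real.negMulLog ε +
      r * Real.negMulLog (1 - ε) with hf
    have hcont : ContinuousAt f 0 := by fun_prop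
    have hneg : f 0 < 0 := by
      simp only [hf, Real.negMulLog_zero, sub_zero, Real.negMulLog_one, mul_zero,
        add_zero]
      have : (0:ℝ) < Real.log 2 := Real.log_pos (by norm_num)
      have hr1 : (1:ℝ) ≤ (r:ℝ) - 1 := by
        have : (2:ℝ) ≤ r := by exact_mod_cast hr
        linarith
      nlinarith
    have hmem : f ⁻¹' Set.Iio 0 ∈ nhds (0 : ℝ) := hcont (Iio_mem_nhds hneg)
    rcases Metric.mem_nhds_iff.mp hmem with ⟨δ, hδ, hball⟩
    refine ⟨δ, hδ, fun ε hε hεδ => ?_⟩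
    have hball' : f ε < 0 := by
      have : ε ∈ Metric.ball (0:ℝ) δ := by
        simp [Metric.mem_ball, Real.dist_eq, abs_of_pos hε, hεδ]
      exact hball this
    have : f ε = -((r : ℝ) - 1) * Real.log 2 - r * ε * Real.log ε -
        r * (1 - ε) * Real.log (1 - ε) := by
      simp only [hf, Real.negMulLog]; ring
    linarith [hball', this.symm.le, this.le]
end
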